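/- arXiv:2407.20030 — 5 statements merged into one kernel-verified Lean document; each statement's English description precedes it below -/
import Mathlib

section
/- Let X be a real Banach space and let X₀ be an infinite-dimensional closed subspace of X such that (i) for every pair of infinite-dimensional closed subspaces Y₁, Y₂ of X₀ one has dist(S_{Y₁}, S_{Y₂}) = 0, and (ii) for every infinite-dimensional closed subspace Z of X one has dist(S_{X₀}, S_Z) = 0. Then for every pair of infinite-dimensional closed subspaces Y₁, Y₂ of X one has dist(S_{Y₁}, S_{Y₂}) = 0. -/
/-- `dist(S_Y, S_Z) = 0` for two subspaces `Y`, `Z` of a normed space: for every `ε > 0`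
there are unit vectors `y ∈ Y`, `z ∈ Z` with `‖y - z‖ < ε`. -/
def SphereDistZero {X : Type*} [NormedAddCommGroup X] [NormedSpace ℝ X]
    (Y Z : Submodule ℝ X) : Prop :=
  ∀ ε : ℝ, 0 < ε → ∃ y ∈ Y, ∃ z ∈ Z, ‖y‖ = 1 ∧ ‖z‖ = 1 ∧ ‖y - z‖ < ε


-- generic dependent-choice-with-history lemma
theorem exists_seq_good {T : Type*} [Nonempty T] (Good : ℕ → (ℕ → T) → Prop)
    (hdep : ∀ n (s s' : ℕ → T), (∀ k ≤ n, s k = s' k) → Good n s → Good n s')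
    (H : ∀ n (s : ℕ → T), (∀ k < n, Good k s) → ∃ t, Good n (Function.update s n t)) :
    ∃ s : ℕ → T, ∀ n, Good n s := by
  classical
  let h : ∀ n : ℕ, {s : ℕ → T // ∀ k < n, Good k s} := fun n =>
    Nat.rec ⟨fun _ => Classical.arbitrary T, fun k hk => absurd hk (Nat.not_lt_zero k)⟩
      (fun n ih =>
        ⟨Function.update ih.1 n (Classical.choose (H n ih.1 ih.2)), by
          intro k hk
          rcases Nat.lt_succ_iff_lt_or_eq.1 hk with hk' | rfl
          · refine hdep k ih.1 _ (fun j hj => ?_) (ih.2 k hk')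
            exact (Function.update_of_ne (by omega) _ _).symm
          · exact Classical.choose_spec (H k ih.1 ih.2)⟩) n
  have hstab : ∀ m k, k < m → (h m).1 k = (h (k+1)).1 k := by
    intro m
    induction m with
    | zero => intro k hk; omega
    | succ n ih =>
      intro k hk
      rcases Nat.lt_succ_iff_lt_or_eq.1 hk with hk' | rfl
      · have : (h (n+1)).1 k = (h n).1 k := Function.update_of_ne (by omega) _ _
        rw [this, ih k hk']
      · rfl
  refine ⟨fun k => (h (k+1)).1 k, fun n => ?_⟩
  refine hdep n (h (n+1)).1 _ (fun j hj => ?_) ((h (n+1)).2 n (Nat.lt_succ_self n))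
  rcases Nat.lt_or_ge j n with hj' | hj'
  · exact hstab (n+1) j (by omega)
  · have : j = n := by omega
    subst this; rfl

open Metric Pointwise

/-- separation of a point from a subspace with norm control -/
theorem sep_lemma {X : Type*} [NormedAddCommGroup X] [NormedSpace ℝ X]
    (V : Submodule ℝ X) (x : X) (d : ℝ) (hd : 0 < d)
    (hfar : ∀ v ∈ V, d ≤ ‖x - v‖) :
    ∃ f : X →L[ℝ] ℝ, f x = 1 ∧ (∀ v ∈ V, f v = 0) ∧ ‖f‖ ≤ 1 / d := by
  classical
  set U : Set X := (V : Set X) + Metric.ball (0:X) d with hU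
  have hUopen : IsOpen U := by
    have : U = ⋃ v ∈ (V : Set X), Metric.ball v d := by
      ext u
      simp only [hU, Set.mem_add, Set.mem_iUnion, Metric.mem_ball]
      constructor
      · rintro ⟨v, hv, b, hb, rfl⟩
        refine ⟨v, hv, ?_⟩
        simp only [Metric.mem_ball, dist_eq_norm, sub_zero] at hb
        rw [dist_eq_norm]
        simpa using hb
      · rintro ⟨v, hv, hvb⟩
        rw [dist_eq_norm] at hvb
        exact ⟨v, hv, u - v, by simp [dist_eq_norm]; simpa [norm_sub_rev] using hvb, by abel⟩
    rw [this]
    exact isOpen_biUnion fun v _ => Metric.isOpen_ball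
  have hUconv : Convex ℝ U := (V.convex).add (convex_ball 0 d)
  have hxU : x ∉ U := by
    rintro ⟨v, hv, b, hb, rfl⟩
    have h1 := hfar v hv
    have : v + b - v = b := by abel
    rw [this] at h1
    simp only [Metric.mem_ball, dist_eq_norm, sub_zero] at hb
    linarith
  obtain ⟨f, hf⟩ := geometric_hahn_banach_open_point hUconv hUopen hxU
  have hball : ∀ b ∈ Metric.ball (0:X) d, f b < f x := by
    intro b hb
    exact hf b ⟨0, V.zero_mem, b, hb, (zero_add b)⟩
  have hV0 : ∀ v ∈ V, f v = 0 := by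
    intro v hv
    by_contra hfv
    have key : ((f x + 1) / f v) * f v < f x := by
      have : (((f x + 1) / f v) • v : X) ∈ U :=
        ⟨((f x + 1) / f v) • v, V.smul_mem _ hv, 0, by simpa using hd, (add_zero _)⟩
      simpa using hf _ this
    rw [div_mul_cancel₀ _ hfv] at key; linarith
  have hfx : 0 < f x := by
    have := hball 0 (by simpa using hd)
    simpa using this
  have hnorm : ‖f‖ ≤ f x / d := by
    refine ContinuousLinearMap.opNorm_le_bound f (by positivity) ?_
    intro u
    rcases eq_or_ne u 0 with rfl | hu
    · simp
    have hupos : (0:ℝ) < ‖u‖ := norm_pos_iff.2 hu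
    have hs : ∀ s : ℝ, 0 < s → s < d → |f u| * s ≤ f x * ‖u‖ := by
      intro s hs0 hsd
      have hcancel : s / ‖u‖ * ‖u‖ = s := div_mul_cancel₀ _ (ne_of_gt hupos)
      rcases abs_cases (f u) with ⟨he, _⟩ | ⟨he, _⟩
      · have hb : (s / ‖u‖) • u ∈ Metric.ball (0:X) d := by
          simp only [Metric.mem_ball, dist_eq_norm, sub_zero, norm_smul]
          rw [Real.norm_eq_abs, abs_of_pos (by positivity), hcancel]
          exact hsd
        have h2 := hball _ hb
        rw [map_smul, smul_eq_mul] at h2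
        have hne : ‖u‖ ≠ 0 := ne_of_gt hupos
        have h4 : s / ‖u‖ * f u * ‖u‖ = f u * s := by field_simp
        rw [he]
        nlinarith
      · have hb : (-(s / ‖u‖)) • u ∈ Metric.ball (0:X) d := by
          simp only [Metric.mem_ball, dist_eq_norm, sub_zero, norm_smul]
          rw [Real.norm_eq_abs, abs_neg, abs_of_pos (by positivity), hcancel]
          exact hsd
        have h2 := hball _ hb
        rw [map_smul, smul_eq_mul] at h2
        have hne : ‖u‖ ≠ 0 := ne_of_gt hupos
        have h4 : s / ‖u‖ * f u * ‖u‖ = f u * s := by field_simp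
        rw [he]
        nlinarith [mul_lt_mul_of_pos_right h2 hupos, h4]
    have hmain : |f u| * d ≤ f x * ‖u‖ := by
      by_contra hcon
      push_neg at hcon
      have hfu : 0 < |f u| := by nlinarith [abs_nonneg (f u), mul_pos hfx hupos]
      set s := (f x * ‖u‖ / |f u| + d) / 2 with hsdef
      have hq : f x * ‖u‖ / |f u| < d := by
        rw [div_lt_iff₀ hfu]; linarith [hcon]
      have hs0 : 0 < s := by
        have : 0 ≤ f x * ‖u‖ / |f u| := by positivity
        simp only [hsdef]; linarith
      have hsd : s < d := by simp only [hsdef]; linarith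
      have h3 := hs s hs0 hsd
      rw [mul_comm (|f u|) s, ← le_div_iff₀ hfu] at h3
      have h2 : f x * ‖u‖ / |f u| < s := by simp only [hsdef]; linarith
      linarith
    calc |f u| = |f u| * d / d := by field_simp
      _ ≤ f x * ‖u‖ / d := by gcongr
      _ = f x / d * ‖u‖ := by ring
  refine ⟨(f x)⁻¹ • f, ?_, ?_, ?_⟩
  · simp [inv_mul_cancel₀ (ne_of_gt hfx)]
  · intro v hv; simp [hV0 v hv]
  · refine ContinuousLinearMap.opNorm_le_bound _ (by positivity) ?_
    intro u
    have h1 : ‖f u‖ ≤ f x / d * ‖u‖ := f.le_of_opNorm_le hnorm u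
    simp only [ContinuousLinearMap.smul_apply, smul_eq_mul, Real.norm_eq_abs, abs_mul,
      abs_inv, abs_of_pos hfx]
    rw [Real.norm_eq_abs] at h1
    calc (f x)⁻¹ * |f u| ≤ (f x)⁻¹ * (f x / d * ‖u‖) := by
          apply mul_le_mul_of_nonneg_left h1 (by positivity)
      _ = 1 / d * ‖u‖ := by field_simp

open Metric FiniteDimensional

theorem not_findim_inf_ker {X : Type*} [NormedAddCommGroup X] [NormedSpace ℝ X]
    (P : Submodule ℝ X) (hP : ¬ FiniteDimensional ℝ P) (f : X →L[ℝ] ℝ) :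
    ¬ FiniteDimensional ℝ ↥(P ⊓ LinearMap.ker (f : X →ₗ[ℝ] ℝ)) := by
  intro h
  by_cases hex : ∃ v ∈ P, f v ≠ 0
  · obtain ⟨v, hvP, hfv⟩ := hex
    have hle : P ≤ (P ⊓ LinearMap.ker (f : X →ₗ[ℝ] ℝ)) ⊔ Submodule.span ℝ {v} := by
      intro p hp
      have hmem : p - (f p / f v) • v ∈ P ⊓ LinearMap.ker (f : X →ₗ[ℝ] ℝ) := by
        refine ⟨Submodule.sub_mem _ hp (Submodule.smul_mem _ _ hvP), ?_⟩
        simp only [SetLike.mem_coe, LinearMap.mem_ker, map_sub, map_smul, smul_eq_mul, ContinuousLinearMap.coe_coe]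
        field_simp
        ring
      have hrepr : p = (p - (f p / f v) • v) + (f p / f v) • v := by abel
      rw [hrepr]
      exact Submodule.add_mem_sup hmem
        (Submodule.smul_mem _ _ (Submodule.mem_span_singleton_self v))
    haveI := h
    exact hP (Submodule.finiteDimensional_of_le hle)
  · push_neg at hex
    have : P ⊓ LinearMap.ker (f : X →ₗ[ℝ] ℝ) = P := inf_eq_left.2 fun p hp => LinearMap.mem_ker.2 (hex p hp)
    rw [this] at h
    exact hP h

theorem not_findim_finset_inf_ker {X : Type*} [NormedAddCommGroup X] [NormedSpace ℝ X]
    {ι : Type*} (s : Finset ι) (g : ι → X →L[ℝ] ℝ) (P : Submodule ℝ X)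
    (hP : ¬ FiniteDimensional ℝ P) :
    ¬ FiniteDimensional ℝ ↥(P ⊓ s.inf fun i => LinearMap.ker (g i : X →ₗ[ℝ] ℝ)) := by
  classical
  induction s using Finset.induction with
  | empty =>
    rw [Finset.inf_empty, inf_top_eq]
    exact hP
  | @insert a s ha ih =>
    have heq : P ⊓ (insert a s).inf (fun i => LinearMap.ker (g i : X →ₗ[ℝ] ℝ))
        = (P ⊓ s.inf fun i => LinearMap.ker (g i : X →ₗ[ℝ] ℝ)) ⊓ LinearMap.ker (g a : X →ₗ[ℝ] ℝ) := by
      rw [Finset.inf_insert, inf_comm (LinearMap.ker (g a : X →ₗ[ℝ] ℝ)), ← inf_assoc]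
    rw [heq]
    exact not_findim_inf_ker _ ih (g a)

theorem isClosed_inf_finset_inf_ker {X : Type*} [NormedAddCommGroup X] [NormedSpace ℝ X]
    {ι : Type*} (s : Finset ι) (g : ι → X →L[ℝ] ℝ) (P : Submodule ℝ X)
    (hP : IsClosed (P : Set X)) :
    IsClosed ((P ⊓ s.inf fun i => LinearMap.ker (g i : X →ₗ[ℝ] ℝ) : Submodule ℝ X) : Set X) := by
  classical
  induction s using Finset.induction with
  | empty =>
    rw [Finset.inf_empty, inf_top_eq]
    exact hP
  | @insert a s ha ih =>
    have heq : P ⊓ (insert a s).inf (fun i => LinearMap.ker (g i : X →ₗ[ℝ] ℝ))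
        = (P ⊓ s.inf fun i => LinearMap.ker (g i : X →ₗ[ℝ] ℝ)) ⊓ LinearMap.ker (g a : X →ₗ[ℝ] ℝ) := by
      rw [Finset.inf_insert, inf_comm (LinearMap.ker (g a : X →ₗ[ℝ] ℝ)), ← inf_assoc]
    rw [heq, Submodule.coe_inf]
    exact ih.inter (ContinuousLinearMap.isClosed_ker (g a))

theorem far_lemma {X : Type*} [NormedAddCommGroup X] [NormedSpace ℝ X] [CompleteSpace X]
    (V : Submodule ℝ X) [FiniteDimensional ℝ V] :
    ∃ (r : ℝ) (m : ℕ) (φ : Fin m → X →L[ℝ] ℝ), 0 < r ∧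
      ∀ z : X, (∀ j, φ j z = 0) → ∀ v ∈ V, r * ‖z‖ ≤ ‖z - v‖ := by
  classical
  set m := Module.finrank ℝ V with hm
  set b : Module.Basis (Fin m) ℝ V := Module.finBasis ℝ V with hb
  set e : Fin m → X := fun j => (b j : X) with he
  have li : LinearIndependent ℝ e := b.linearIndependent.map' V.subtype V.ker_subtype
  have hφ : ∀ j : Fin m, ∃ φ : X →L[ℝ] ℝ, φ (e j) = 1 ∧ ∀ l, l ≠ j → φ (e l) = 0 := by
    intro j
    set Vj : Submodule ℝ X := Submodule.span ℝ (e '' {j}ᶜ) with hVj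
    haveI : FiniteDimensional ℝ Vj :=
      FiniteDimensional.span_of_finite ℝ ((Set.toFinite _).image e)
    have hclosed : IsClosed (Vj : Set X) := Submodule.closed_of_finiteDimensional Vj
    have hnot : e j ∉ Vj := li.notMem_span_image (by simp)
    have hdpos : 0 < infDist (e j) (Vj : Set X) :=
      (hclosed.notMem_iff_infDist_pos ⟨0, Vj.zero_mem⟩).1 hnot
    obtain ⟨φ, hφ1, hφ0, _⟩ := sep_lemma Vj (e j) _ hdpos (fun v hv => by
      rw [← dist_eq_norm]
      exact infDist_le_dist_of_mem hv)
    refine ⟨φ, hφ1, fun l hl => hφ0 _ (Submodule.subset_span ⟨l, by simp [hl], rfl⟩)⟩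
  choose φ hφ1 hφ0 using hφ
  set S : ℝ := ∑ j, ‖φ j‖ * ‖e j‖ with hS
  have hS0 : 0 ≤ S := Finset.sum_nonneg fun j _ => by positivity
  refine ⟨1 / (1 + S), m, φ, by positivity, ?_⟩
  intro z hz v hv
  set c := b.repr ⟨v, hv⟩ with hc
  have hvsum : v = ∑ j, c j • e j := by
    have := b.sum_repr ⟨v, hv⟩
    have h2 := congrArg (Submodule.subtype V) this
    simp only [map_sum, map_smul] at h2
    exact h2.symm
  have hcj : ∀ j, φ j v = c j := by
    intro j
    rw [hvsum, map_sum]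
    rw [Finset.sum_eq_single j]
    · simp [hφ1 j]
    · intro l _ hl
      simp [hφ0 j l hl]
    · intro h; exact absurd (Finset.mem_univ j) h
  have hcbound : ∀ j, |c j| ≤ ‖φ j‖ * ‖z - v‖ := by
    intro j
    have : (φ j) (z - v) = -(c j) := by rw [map_sub, hz j, hcj j]; ring
    calc |c j| = |(φ j) (z - v)| := by rw [this, abs_neg]
      _ ≤ ‖φ j‖ * ‖z - v‖ := (φ j).le_opNorm _
  have hnv : ‖v‖ = ‖∑ j, c j • e j‖ := by rw [← hvsum]
  have hvnorm : ‖v‖ ≤ S * ‖z - v‖ := by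
    calc ‖v‖ = ‖∑ j, c j • e j‖ := hnv
      _ ≤ ∑ j, ‖φ j‖ * ‖e j‖ * ‖z - v‖ := by
          refine (norm_sum_le _ _).trans (Finset.sum_le_sum fun j _ => ?_)
          rw [norm_smul, Real.norm_eq_abs]
          calc |c j| * ‖e j‖ ≤ (‖φ j‖ * ‖z - v‖) * ‖e j‖ := by
                apply mul_le_mul_of_nonneg_right (hcbound j) (norm_nonneg _)
            _ = ‖φ j‖ * ‖e j‖ * ‖z - v‖ := by ring
      _ = S * ‖z - v‖ := by rw [hS, Finset.sum_mul]
  have hznorm : ‖z‖ ≤ (1 + S) * ‖z - v‖ := by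
    calc ‖z‖ = ‖(z - v) + v‖ := by rw [sub_add_cancel]
      _ ≤ ‖z - v‖ + ‖v‖ := norm_add_le _ _
      _ ≤ ‖z - v‖ + S * ‖z - v‖ := by linarith
      _ = (1 + S) * ‖z - v‖ := by ring
  rw [div_mul_eq_mul_div, one_mul, div_le_iff₀ (by positivity : (0:ℝ) < 1 + S)]
  calc ‖z‖ ≤ (1 + S) * ‖z - v‖ := hznorm
    _ = ‖z - v‖ * (1 + S) := by ring

set_option maxHeartbeats 1000000 in
theorem key_lemma {X : Type*} [NormedAddCommGroup X] [NormedSpace ℝ X] [CompleteSpace X]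
    (X₀ : Submodule ℝ X) (hX₀closed : IsClosed (X₀ : Set X))
    (hprox : ∀ Z : Submodule ℝ X, IsClosed (Z : Set X) → ¬ FiniteDimensional ℝ Z →
      SphereDistZero X₀ Z)
    (Y : Submodule ℝ X) (hYclosed : IsClosed (Y : Set X)) (hYinf : ¬ FiniteDimensional ℝ Y)
    (δ : ℝ) (hδ : 0 < δ) :
    ∃ W : Submodule ℝ X, W ≤ X₀ ∧ IsClosed (W : Set X) ∧ (¬ FiniteDimensional ℝ W) ∧
      ∀ w ∈ W, ‖w‖ = 1 → ∃ y ∈ Y, ‖y‖ = 1 ∧ ‖w - y‖ < δ := by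
  classical
  set c : ℝ := min (1/20) (δ/36) with hcdef
  have hc0 : 0 < c := lt_min (by norm_num) (by positivity)
  have hc20 : c ≤ 1/20 := min_le_left _ _
  have hcδ : c ≤ δ/36 := min_le_right _ _
  haveI : Nonempty (X × X × (X →L[ℝ] ℝ)) := ⟨(0, 0, 0)⟩
  set Good : ℕ → (ℕ → X × X × (X →L[ℝ] ℝ)) → Prop := fun n s =>
    (s n).1 ∈ X₀ ∧ ‖(s n).1‖ = 1 ∧ (s n).2.1 ∈ Y ∧ ‖(s n).2.1‖ = 1 ∧
    (∀ k, k < n → (s k).2.2 ((s n).2.1) = 0) ∧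
    (s n).2.2 ((s n).1) = 1 ∧ (∀ k, k < n → (s n).2.2 ((s k).1) = 0) ∧
    ‖(s n).2.2‖ * ‖(s n).1 - (s n).2.1‖ ≤ c * (1/2)^n with hGdef
  have hdep : ∀ n (s s' : ℕ → X × X × (X →L[ℝ] ℝ)),
      (∀ k ≤ n, s k = s' k) → Good n s → Good n s' := by
    intro n s s' hag hg
    obtain ⟨h1, h2, h3, h4, h5, h6, h7, h8⟩ := hg
    have hn := hag n le_rfl
    refine ⟨?_, ?_, ?_, ?_, ?_, ?_, ?_, ?_⟩
    · rw [← hn]; exact h1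
    · rw [← hn]; exact h2
    · rw [← hn]; exact h3
    · rw [← hn]; exact h4
    · intro k hk; rw [← hag k hk.le, ← hn]; exact h5 k hk
    · rw [← hn]; exact h6
    · intro k hk; rw [← hag k hk.le, ← hn]; exact h7 k hk
    · rw [← hn]; exact h8
  have H : ∀ n (s : ℕ → X × X × (X →L[ℝ] ℝ)), (∀ k < n, Good k s) →
      ∃ t, Good n (Function.update s n t) := by
    intro n s _
    set V : Submodule ℝ X :=
      Submodule.span ℝ (((Finset.range n).image (fun k => (s k).1) : Finset X) : Set X) with hV
    obtain ⟨r, m, φ, hr, hφ⟩ := far_lemma V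
    set Z : Submodule ℝ X :=
      (Y ⊓ (Finset.range n).inf fun k => LinearMap.ker ((s k).2.2 : X →ₗ[ℝ] ℝ)) ⊓
        (Finset.univ : Finset (Fin m)).inf fun j => LinearMap.ker (φ j : X →ₗ[ℝ] ℝ) with hZ
    have hZinf : ¬ FiniteDimensional ℝ Z :=
      not_findim_finset_inf_ker _ _ _ (not_findim_finset_inf_ker _ _ _ hYinf)
    have hZclosed : IsClosed (Z : Set X) :=
      isClosed_inf_finset_inf_ker _ _ _ (isClosed_inf_finset_inf_ker _ _ _ hYclosed)
    set ε : ℝ := min (r/2) (c * (1/2)^n * r / 4) with hε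
    have hεpos : 0 < ε := lt_min (by positivity) (by positivity)
    obtain ⟨x, hxX₀, z, hzZ, hx1, hz1, hxz⟩ := hprox Z hZclosed hZinf ε hεpos
    have hzZ' : (z ∈ Y ∧ z ∈ (Finset.range n).inf fun k => LinearMap.ker ((s k).2.2 : X →ₗ[ℝ] ℝ)) ∧
        z ∈ (Finset.univ : Finset (Fin m)).inf fun j => LinearMap.ker (φ j : X →ₗ[ℝ] ℝ) := by
      rw [hZ, Submodule.mem_inf, Submodule.mem_inf] at hzZ
      exact hzZ
    have hzY : z ∈ Y := hzZ'.1.1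
    have hzker : ∀ k, k < n → (s k).2.2 z = 0 := by
      intro k hk
      have h := Submodule.mem_finsetInf.1 hzZ'.1.2 k (Finset.mem_range.2 hk)
      exact h
    have hzφ : ∀ j, φ j z = 0 := by
      intro j
      have h := Submodule.mem_finsetInf.1 hzZ'.2 j (Finset.mem_univ j)
      exact h
    have hfarx : ∀ v ∈ V, r/2 ≤ ‖x - v‖ := by
      intro v hv
      have h1 := hφ z hzφ v hv
      rw [hz1, mul_one] at h1
      have h2 : ‖z - v‖ ≤ ‖z - x‖ + ‖x - v‖ := by
        have h := dist_triangle z x v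
        simpa [dist_eq_norm] using h
      have h3 : ‖z - x‖ = ‖x - z‖ := norm_sub_rev _ _
      have h4 : ‖x - z‖ < r/2 := lt_of_lt_of_le hxz (min_le_left _ _)
      linarith
    obtain ⟨f, hf1, hf0, hfn⟩ := sep_lemma V x (r/2) (by positivity) hfarx
    refine ⟨(x, z, f), ?_⟩
    have hupn : (Function.update s n (x, z, f)) n = (x, z, f) := Function.update_self _ _ _
    have hupk : ∀ k, k < n → (Function.update s n (x, z, f)) k = s k := fun k hk =>
      Function.update_of_ne (by omega) _ _
    refine ⟨?_, ?_, ?_, ?_, ?_, ?_, ?_, ?_⟩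
    · rw [hupn]; exact hxX₀
    · rw [hupn]; exact hx1
    · rw [hupn]; exact hzY
    · rw [hupn]; exact hz1
    · intro k hk; rw [hupn, hupk k hk]; exact hzker k hk
    · rw [hupn]; exact hf1
    · intro k hk
      rw [hupn, hupk k hk]
      exact hf0 _ (Submodule.subset_span
        (Finset.mem_coe.2 (Finset.mem_image_of_mem _ (Finset.mem_range.2 hk))))
    · rw [hupn]
      have hle2 : ‖x - z‖ ≤ c * (1/2)^n * r / 4 := le_trans hxz.le (min_le_right _ _)
      have h5 : ‖f‖ * ‖x - z‖ ≤ (1/(r/2)) * (c * (1/2)^n * r / 4) :=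
        mul_le_mul hfn hle2 (norm_nonneg _) (by positivity)
      have h6 : (1/(r/2)) * (c * (1/2)^n * r / 4) = c * (1/2)^n / 2 := by
        field_simp; ring
      have h7 : (0:ℝ) ≤ c * (1/2)^n := by positivity
      rw [h6] at h5
      linarith
  obtain ⟨s, hGood⟩ := exists_seq_good Good hdep H
  set x : ℕ → X := fun n => (s n).1 with hxdef
  set z : ℕ → X := fun n => (s n).2.1 with hzdef
  set f : ℕ → X →L[ℝ] ℝ := fun n => (s n).2.2 with hfdef
  have hx₀ : ∀ n, x n ∈ X₀ := fun n => (hGood n).1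
  have hx1 : ∀ n, ‖x n‖ = 1 := fun n => (hGood n).2.1
  have hzY : ∀ n, z n ∈ Y := fun n => (hGood n).2.2.1
  have hz1 : ∀ n, ‖z n‖ = 1 := fun n => (hGood n).2.2.2.1
  have hfz : ∀ k n, k < n → f k (z n) = 0 := fun k n hk => (hGood n).2.2.2.2.1 k hk
  have hfx1 : ∀ n, f n (x n) = 1 := fun n => (hGood n).2.2.2.2.2.1
  have hfx0 : ∀ k n, k < n → f n (x k) = 0 := fun k n hk => (hGood n).2.2.2.2.2.2.1 k hk
  have hbd : ∀ n, ‖f n‖ * ‖x n - z n‖ ≤ c * (1/2)^n := fun n => (hGood n).2.2.2.2.2.2.2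
  have hfge1 : ∀ n, 1 ≤ ‖f n‖ := by
    intro n
    have h1 := (f n).le_opNorm (x n)
    rw [hx1 n, mul_one, hfx1 n] at h1
    simpa using h1
  have hxz : ∀ n, ‖x n - z n‖ ≤ c * (1/2)^n := by
    intro n
    calc ‖x n - z n‖ ≤ ‖f n‖ * ‖x n - z n‖ :=
          le_mul_of_one_le_left (norm_nonneg _) (hfge1 n)
      _ ≤ c * (1/2)^n := hbd n
  have geo : ∀ (a b : ℕ), (∑ i ∈ Finset.Ico a b, ((1:ℝ)/2)^i) ≤ 2 * (1/2)^a := by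
    intro a b
    rcases le_or_gt a b with hab | hab
    · have heq : ∀ b', a ≤ b' → (∑ i ∈ Finset.Ico a b', ((1:ℝ)/2)^i)
          = 2 * (1/2)^a - 2 * (1/2)^b' := by
        intro b' hb'
        induction b', hb' using Nat.le_induction with
        | base => simp
        | succ b' hb' ih =>
          rw [Finset.sum_Ico_succ_top hb', ih, pow_succ]
          ring
      rw [heq b hab]
      have h : (0:ℝ) ≤ 2 * (1/2)^b := by positivity
      linarith
    · rw [Finset.Ico_eq_empty (by omega)]
      simp only [Finset.sum_empty]
      positivity
  -- coefficient bound
  have coef : ∀ (N : ℕ) (a : ℕ → ℝ) (k : ℕ), k < N →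
      |a k| ≤ 2 * ‖f k‖ * ‖∑ i ∈ Finset.range N, a i • x i‖ := by
    have main : ∀ (d N : ℕ) (a : ℕ → ℝ) (k : ℕ), k < N → N - k ≤ d →
        |a k| ≤ 2 * ‖f k‖ * ‖∑ i ∈ Finset.range N, a i • x i‖ := by
      intro d
      induction d with
      | zero => intro N a k hk hd; omega
      | succ d ih =>
        intro N a k hk _
        set w : X := ∑ i ∈ Finset.range N, a i • x i with hw
        set g : ℕ → ℝ := fun i => a i * f k (x i) with hg
        have hfkw : f k w = ∑ i ∈ Finset.range N, g i := by
          rw [hw, map_sum]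
          exact Finset.sum_congr rfl fun i _ => by rw [map_smul, smul_eq_mul]
        have hsplit : g k + ∑ i ∈ (Finset.range N).erase k, g i = ∑ i ∈ Finset.range N, g i :=
          Finset.add_sum_erase _ _ (Finset.mem_range.2 hk)
        have hgk : g k = a k := by rw [hg]; simp [hfx1 k]
        have hterm : ∀ i ∈ (Finset.range N).erase k,
            |g i| ≤ (if k < i then 2 * ‖w‖ * ‖f k‖ * c * (1/2)^i else 0) := by
          intro i hi
          have hiN : i < N := Finset.mem_range.1 (Finset.mem_of_mem_erase hi)
          have hik : i ≠ k := Finset.ne_of_mem_erase hi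
          rcases lt_or_gt_of_ne hik with hik' | hik'
          · rw [if_neg (by omega)]
            have h0 : f k (x i) = 0 := hfx0 i k hik'
            rw [hg]; simp [h0]
          · rw [if_pos hik']
            have hai : |a i| ≤ 2 * ‖f i‖ * ‖w‖ := ih N a i hiN (by omega)
            have hfki : |f k (x i)| ≤ ‖f k‖ * ‖x i - z i‖ := by
              have h0 : f k (x i) = f k (x i - z i) := by
                rw [map_sub, hfz k i hik', sub_zero]
              rw [h0]
              exact (f k).le_opNorm _
            have habs : |g i| = |a i| * |f k (x i)| := by rw [hg]; exact abs_mul _ _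
            have hstep : |a i| * |f k (x i)| ≤ (2 * ‖f i‖ * ‖w‖) * (‖f k‖ * ‖x i - z i‖) :=
              mul_le_mul hai hfki (abs_nonneg _) (by positivity)
            have hre : (2 * ‖f i‖ * ‖w‖) * (‖f k‖ * ‖x i - z i‖)
                = (2 * ‖w‖ * ‖f k‖) * (‖f i‖ * ‖x i - z i‖) := by ring
            have hfin : (2 * ‖w‖ * ‖f k‖) * (‖f i‖ * ‖x i - z i‖)
                ≤ (2 * ‖w‖ * ‖f k‖) * (c * (1/2)^i) :=
              mul_le_mul_of_nonneg_left (hbd i) (by positivity)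
            rw [habs]
            calc |a i| * |f k (x i)| ≤ (2 * ‖w‖ * ‖f k‖) * (c * (1/2)^i) := by
                  rw [← hre] at hfin
                  exact le_trans hstep hfin
              _ = 2 * ‖w‖ * ‖f k‖ * c * (1/2)^i := by ring
        have habs_sum : |∑ i ∈ (Finset.range N).erase k, g i|
            ≤ ∑ i ∈ (Finset.range N).erase k,
                (if k < i then 2 * ‖w‖ * ‖f k‖ * c * (1/2)^i else 0) :=
          le_trans (Finset.abs_sum_le_sum_abs _ _) (Finset.sum_le_sum hterm)
        have hsub : Finset.Ico (k+1) N ⊆ Finset.range N := by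
          intro i hi
          rw [Finset.mem_Ico] at hi
          exact Finset.mem_range.2 hi.2
        have hrange_sum : ∑ i ∈ (Finset.range N).erase k,
              (if k < i then 2 * ‖w‖ * ‖f k‖ * c * (1/2)^i else 0)
            ≤ ∑ i ∈ Finset.range N,
              (if k < i then 2 * ‖w‖ * ‖f k‖ * c * (1/2)^i else 0) := by
          apply Finset.sum_le_sum_of_subset_of_nonneg (Finset.erase_subset _ _)
          intro i _ _
          by_cases h : k < i
          · rw [if_pos h]; positivity
          · rw [if_neg h]
        have hIco : ∑ i ∈ Finset.range N,
              (if k < i then 2 * ‖w‖ * ‖f k‖ * c * (1/2)^i else 0)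
            = ∑ i ∈ Finset.Ico (k+1) N, 2 * ‖w‖ * ‖f k‖ * c * (1/2)^i := by
          rw [← Finset.sum_subset hsub]
          · refine Finset.sum_congr rfl fun i hi => ?_
            rw [Finset.mem_Ico] at hi
            rw [if_pos (by omega)]
          · intro i hiN hni
            have h1 : i < N := Finset.mem_range.1 hiN
            rw [Finset.mem_Ico] at hni
            rw [if_neg (by omega)]
        have hgeo2 : ∑ i ∈ Finset.Ico (k+1) N, (2:ℝ) * ‖w‖ * ‖f k‖ * c * (1/2)^i
            ≤ (2 * ‖w‖ * ‖f k‖ * c) * ((1/2)^k) := by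
          rw [← Finset.mul_sum]
          have h1 := geo (k+1) N
          have h2 : (2:ℝ) * (1/2)^(k+1) = (1/2)^k := by rw [pow_succ]; ring
          rw [h2] at h1
          exact mul_le_mul_of_nonneg_left h1 (by positivity)
        have hak : a k = f k w - ∑ i ∈ (Finset.range N).erase k, g i := by
          rw [hfkw, ← hsplit, hgk]; ring
        have hfkwb : |f k w| ≤ ‖f k‖ * ‖w‖ := by
          have h := (f k).le_opNorm w
          rwa [Real.norm_eq_abs] at h
        have htot : |a k| ≤ ‖f k‖ * ‖w‖ + 2 * ‖w‖ * ‖f k‖ * c * (1/2)^k := by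
          rw [hak]
          calc |f k w - ∑ i ∈ (Finset.range N).erase k, g i|
              ≤ |f k w| + |∑ i ∈ (Finset.range N).erase k, g i| := abs_sub _ _
            _ ≤ ‖f k‖ * ‖w‖ + 2 * ‖w‖ * ‖f k‖ * c * (1/2)^k := by
                have := le_trans habs_sum (le_trans hrange_sum (le_of_le_of_eq
                  (le_of_eq hIco) (by rfl) |>.trans hgeo2))
                linarith
        have hp1 : ((1:ℝ)/2)^k ≤ 1 := pow_le_one₀ (by norm_num) (by norm_num)
        have hcp : c * (1/2)^k ≤ 1/20 := le_trans (mul_le_of_le_one_right hc0.le hp1) hc20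
        have hA : (0:ℝ) ≤ ‖f k‖ * ‖w‖ := by positivity
        have hfinal : 2 * ‖w‖ * ‖f k‖ * c * (1/2)^k ≤ ‖f k‖ * ‖w‖ := by
          nlinarith [mul_le_mul_of_nonneg_left hcp hA]
        calc |a k| ≤ ‖f k‖ * ‖w‖ + 2 * ‖w‖ * ‖f k‖ * c * (1/2)^k := htot
          _ ≤ ‖f k‖ * ‖w‖ + ‖f k‖ * ‖w‖ := by linarith
          _ = 2 * ‖f k‖ * ‖w‖ := by ring
    intro N a k hk
    exact main (N - k) N a k hk le_rfl
  -- linear independence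
  have li : LinearIndependent ℝ x := by
    rw [linearIndependent_iff']
    intro t g hsum i hit
    set N : ℕ := t.sup id + 1 with hN
    have htsub : t ⊆ Finset.range N := by
      intro j hj
      exact Finset.mem_range.2 (Nat.lt_succ_of_le (Finset.le_sup (f := id) hj))
    set a : ℕ → ℝ := fun j => if j ∈ t then g j else 0 with ha
    have hsum2 : ∑ j ∈ Finset.range N, a j • x j = 0 := by
      rw [← Finset.sum_subset htsub (fun j _ hjt => by rw [ha]; simp [hjt])]
      rw [← hsum]
      exact Finset.sum_congr rfl fun j hj => by rw [ha]; simp [hj]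
    have hb := coef N a i (htsub hit |> Finset.mem_range.1)
    rw [hsum2, norm_zero, mul_zero] at hb
    have : a i = 0 := abs_eq_zero.1 (le_antisymm hb (abs_nonneg _))
    rw [ha] at this
    simpa [hit] using this
  -- define W
  set W : Submodule ℝ X := (Submodule.span ℝ (Set.range x)).topologicalClosure with hW
  have hspanle : Submodule.span ℝ (Set.range x) ≤ X₀ := by
    rw [Submodule.span_le]
    rintro _ ⟨n, rfl⟩
    exact hx₀ n
  have hWX₀ : W ≤ X₀ := Submodule.topologicalClosure_minimal _ hspanle hX₀closed
  have hWclosed : IsClosed (W : Set X) := Submodule.isClosed_topologicalClosure _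
  have hWinf : ¬ FiniteDimensional ℝ W := by
    intro h
    haveI := h
    set x' : ℕ → W := fun n => ⟨x n, Submodule.le_topologicalClosure _
      (Submodule.subset_span (Set.mem_range_self n))⟩ with hx'
    have li' : LinearIndependent ℝ x' := by
      apply LinearIndependent.of_comp W.subtype
      convert li
      rfl
    exact Module.Finite.not_linearIndependent_of_infinite x' li'
  -- approximation on the span
  have hspan_approx : ∀ w ∈ Submodule.span ℝ (Set.range x), ∃ y ∈ Y, ‖w - y‖ ≤ 4*c*‖w‖ := by
    intro w hw
    rw [Finsupp.mem_span_range_iff_exists_finsupp] at hw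
    obtain ⟨cc, hcc⟩ := hw
    set N : ℕ := cc.support.sup id + 1 with hN
    have hsub : cc.support ⊆ Finset.range N := by
      intro j hj
      exact Finset.mem_range.2 (Nat.lt_succ_of_le (Finset.le_sup (f := id) hj))
    have hrepr : w = ∑ i ∈ Finset.range N, cc i • x i := by
      rw [← hcc, Finsupp.sum]
      exact Finset.sum_subset hsub fun i _ hni => by
        rw [Finsupp.notMem_support_iff.1 hni, zero_smul]
    refine ⟨∑ i ∈ Finset.range N, cc i • z i,
      Submodule.sum_mem _ fun i _ => Submodule.smul_mem _ _ (hzY i), ?_⟩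
    have hdiff : w - ∑ i ∈ Finset.range N, cc i • z i
        = ∑ i ∈ Finset.range N, cc i • (x i - z i) := by
      rw [hrepr, ← Finset.sum_sub_distrib]
      exact Finset.sum_congr rfl fun i _ => (smul_sub _ _ _).symm
    rw [hdiff]
    have hcoefi : ∀ i ∈ Finset.range N, ‖cc i • (x i - z i)‖ ≤ (2 * ‖w‖ * c) * (1/2)^i := by
      intro i hi
      rw [norm_smul, Real.norm_eq_abs]
      have h1 : |cc i| ≤ 2 * ‖f i‖ * ‖w‖ := by
        have := coef N cc i (Finset.mem_range.1 hi)
        rwa [← hrepr] at this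
      calc |cc i| * ‖x i - z i‖ ≤ (2 * ‖f i‖ * ‖w‖) * ‖x i - z i‖ :=
            mul_le_mul_of_nonneg_right h1 (norm_nonneg _)
        _ = (2 * ‖w‖) * (‖f i‖ * ‖x i - z i‖) := by ring
        _ ≤ (2 * ‖w‖) * (c * (1/2)^i) :=
            mul_le_mul_of_nonneg_left (hbd i) (by positivity)
        _ = (2 * ‖w‖ * c) * (1/2)^i := by ring
    calc ‖∑ i ∈ Finset.range N, cc i • (x i - z i)‖
        ≤ ∑ i ∈ Finset.range N, (2 * ‖w‖ * c) * (1/2)^i :=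
          le_trans (norm_sum_le _ _) (Finset.sum_le_sum hcoefi)
      _ = (2 * ‖w‖ * c) * ∑ i ∈ Finset.range N, ((1:ℝ)/2)^i := by rw [Finset.mul_sum]
      _ ≤ (2 * ‖w‖ * c) * (2 * (1/2)^0) := by
          apply mul_le_mul_of_nonneg_left _ (by positivity)
          have h := geo 0 N
          rwa [← Finset.range_eq_Ico] at h
      _ = 4 * c * ‖w‖ := by norm_num; ring
  refine ⟨W, hWX₀, hWclosed, hWinf, ?_⟩
  intro w hwW hw1
  have hwc : w ∈ closure ((Submodule.span ℝ (Set.range x) : Submodule ℝ X) : Set X) := by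
    rw [← Submodule.topologicalClosure_coe]
    exact hwW
  rw [Metric.mem_closure_iff] at hwc
  obtain ⟨w', hw'mem, hw'close⟩ := hwc c hc0
  rw [dist_eq_norm] at hw'close
  have hw'norm : ‖w'‖ ≤ 1 + c := by
    have h1 : ‖w'‖ ≤ ‖w‖ + ‖w - w'‖ := by
      have := norm_sub_le_norm_sub_add_norm_sub w' w 0
      simp only [sub_zero] at this
      have h2 := norm_add_le (w' - w) w
      have h3 : w' - w + w = w' := by abel
      rw [h3] at h2
      rw [norm_sub_rev] at h2
      linarith [h2]
    rw [hw1] at h1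
    linarith
  obtain ⟨y₀, hy₀Y, hy₀close⟩ := hspan_approx w' hw'mem
  have hy₀b : ‖w' - y₀‖ ≤ 8 * c := by
    have h4 : 4 * c * ‖w'‖ ≤ 4 * c * (1 + c) := by
      apply mul_le_mul_of_nonneg_left hw'norm (by positivity)
    have hc1 : c ≤ 1 := by linarith
    nlinarith
  have hwy₀ : ‖w - y₀‖ ≤ 9 * c := by
    have := norm_add_le (w - w') (w' - y₀)
    have h3 : (w - w') + (w' - y₀) = w - y₀ := by abel
    rw [h3] at this
    linarith
  have hy₀norm_lb : 1 - 9 * c ≤ ‖y₀‖ := by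
    have h1 := norm_add_le (w - y₀) y₀
    have h2 : (w - y₀) + y₀ = w := by abel
    rw [h2, hw1] at h1
    linarith [norm_nonneg (w - y₀)]
  have hy₀norm_ub : ‖y₀‖ ≤ 1 + 9 * c := by
    have h1 := norm_add_le (y₀ - w) w
    have h2 : (y₀ - w) + w = y₀ := by abel
    rw [h2, hw1] at h1
    rw [norm_sub_rev] at hwy₀
    linarith
  have hy₀pos : 0 < ‖y₀‖ := by
    have : 9 * c ≤ 9 / 20 := by linarith
    linarith
  refine ⟨‖y₀‖⁻¹ • y₀, Submodule.smul_mem _ _ hy₀Y, ?_, ?_⟩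
  · rw [norm_smul, Real.norm_eq_abs, abs_of_pos (by positivity)]
    exact inv_mul_cancel₀ (ne_of_gt hy₀pos)
  · have hyy₀ : ‖(‖y₀‖⁻¹ • y₀) - y₀‖ = |1 - ‖y₀‖| := by
      have h1 : (‖y₀‖⁻¹ • y₀) - y₀ = (‖y₀‖⁻¹ - 1) • y₀ := by
        rw [sub_smul, one_smul]
      rw [h1, norm_smul, Real.norm_eq_abs]
      rw [← abs_of_nonneg (norm_nonneg y₀), ← abs_mul]
      congr 1
      rw [abs_of_nonneg (norm_nonneg y₀)]
      field_simp
    have habs : |1 - ‖y₀‖| ≤ 9 * c := by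
      rw [abs_le]
      constructor <;> linarith
    have htri := norm_add_le (w - y₀) (y₀ - ‖y₀‖⁻¹ • y₀)
    have h3 : (w - y₀) + (y₀ - ‖y₀‖⁻¹ • y₀) = w - ‖y₀‖⁻¹ • y₀ := by abel
    rw [h3] at htri
    rw [norm_sub_rev] at hyy₀
    calc ‖w - ‖y₀‖⁻¹ • y₀‖ ≤ ‖w - y₀‖ + ‖y₀ - ‖y₀‖⁻¹ • y₀‖ := htri
      _ ≤ 9 * c + 9 * c := by rw [hyy₀]; linarith
      _ = 18 * c := by ring
      _ < δ := by linarith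


theorem statement0
    {X : Type*} [NormedAddCommGroup X] [NormedSpace ℝ X] [CompleteSpace X]
    (X₀ : Submodule ℝ X) (hX₀closed : IsClosed (X₀ : Set X))
    (hX₀inf : ¬ FiniteDimensional ℝ X₀)
    (hHI : ∀ Y₁ Y₂ : Submodule ℝ X, Y₁ ≤ X₀ → Y₂ ≤ X₀ →
      IsClosed (Y₁ : Set X) → IsClosed (Y₂ : Set X) →
      ¬ FiniteDimensional ℝ Y₁ → ¬ FiniteDimensional ℝ Y₂ →
      SphereDistZero Y₁ Y₂)
    (hprox : ∀ Z : Submodule ℝ X, IsClosed (Z : Set X) → ¬ FiniteDimensional ℝ Z →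
      SphereDistZero X₀ Z)
    (Y₁ Y₂ : Submodule ℝ X)
    (hY₁closed : IsClosed (Y₁ : Set X)) (hY₂closed : IsClosed (Y₂ : Set X))
    (hY₁inf : ¬ FiniteDimensional ℝ Y₁) (hY₂inf : ¬ FiniteDimensional ℝ Y₂) :
    SphereDistZero Y₁ Y₂ := by
  intro ε hε
  obtain ⟨W₁, hW₁X₀, hW₁c, hW₁inf, hW₁⟩ :=
    key_lemma X₀ hX₀closed hprox Y₁ hY₁closed hY₁inf (ε/4) (by positivity)
  obtain ⟨W₂, hW₂X₀, hW₂c, hW₂inf, hW₂⟩ :=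
    key_lemma X₀ hX₀closed hprox Y₂ hY₂closed hY₂inf (ε/4) (by positivity)
  obtain ⟨w₁, hw₁W, w₂, hw₂W, hw₁1, hw₂1, hww⟩ :=
    hHI W₁ W₂ hW₁X₀ hW₂X₀ hW₁c hW₂c hW₁inf hW₂inf (ε/4) (by positivity)
  obtain ⟨y₁, hy₁Y, hy₁1, hy₁w⟩ := hW₁ w₁ hw₁W hw₁1
  obtain ⟨y₂, hy₂Y, hy₂1, hy₂w⟩ := hW₂ w₂ hw₂W hw₂1
  refine ⟨y₁, hy₁Y, y₂, hy₂Y, hy₁1, hy₂1, ?_⟩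
  have htri : dist y₁ y₂ ≤ dist y₁ w₁ + dist w₁ w₂ + dist w₂ y₂ := dist_triangle4 _ _ _ _
  rw [dist_eq_norm, dist_eq_norm, dist_eq_norm, dist_eq_norm] at htri
  have h1 : ‖y₁ - w₁‖ = ‖w₁ - y₁‖ := norm_sub_rev _ _
  have h2 : ‖w₂ - y₂‖ < ε/4 := hy₂w
  rw [h1] at htri
  linarith
end

section
/- Let Y be a real Banach space and X an infinite-dimensional closed subspace of Y such that dist(S_{Z₁}, S_{Z₂}) = 0 for every pair of infinite-dimensional closed subspaces Z₁, Z₂ of X. Assume the quotient map Q : Y → Y/X is strictly singular, i.e., for every infinite-dimensional closed subspace Z of Y one has inf{‖Qz‖ : z ∈ Z, ‖z‖ = 1} = 0. Then dist(S_{Z₁}, S_{Z₂}) = 0 for every pair of infinite-dimensional closed subspaces Z₁, Z₂ of Y. -/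
noncomputable def natRecChoice {T : Type*} (d : T)
    (P : (n : ℕ) → ((m : ℕ) → m < n → T) → T → Prop) : ℕ → T
  | n =>
    @dite _ (∃ t, P n (fun m _ => natRecChoice d P m) t) (Classical.dec _)
      (fun h => h.choose) (fun _ => d)
termination_by n => n
decreasing_by all_goals assumption

theorem natRecChoice_spec {T : Type*} (d : T)
    (P : (n : ℕ) → ((m : ℕ) → m < n → T) → T → Prop) (n : ℕ)
    (h : ∃ t, P n (fun m _ => natRecChoice d P m) t) :
    P n (fun m _ => natRecChoice d P m) (natRecChoice d P n) := by
  rw [natRecChoice, dif_pos h]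
  exact h.choose_spec

set_option maxHeartbeats 400000 in
theorem infdim_inf_ker {Y : Type*} [NormedAddCommGroup Y] [NormedSpace ℝ Y]
    (Z : Submodule ℝ Y) (hZ : ¬ FiniteDimensional ℝ Z) (n : ℕ) (f : Fin n → (Y →L[ℝ] ℝ)) :
    ¬ FiniteDimensional ℝ ↥(Z ⊓ ⨅ i, LinearMap.ker ((f i : Y →ₗ[ℝ] ℝ))) := by
  intro hFD
  apply hZ
  set K : Submodule ℝ Y := ⨅ i, LinearMap.ker ((f i : Y →ₗ[ℝ] ℝ)) with hK
  let φ : ↥Z →ₗ[ℝ] (Fin n → ℝ) := LinearMap.pi (fun i => ((f i) : Y →ₗ[ℝ] ℝ).comp Z.subtype)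
  have hker : LinearMap.ker φ = (Z ⊓ K).comap Z.subtype := by
    ext x
    simp only [LinearMap.mem_ker, Submodule.mem_comap, Submodule.mem_inf, hK,
      Submodule.mem_iInf, funext_iff, LinearMap.pi_apply, LinearMap.comp_apply,
      Submodule.coe_subtype, ContinuousLinearMap.coe_coe, Pi.zero_apply, φ]
    exact ⟨fun h => ⟨x.2, fun i => h i⟩, fun h i => h.2 i⟩
  have h1 : FiniteDimensional ℝ ↥(LinearMap.ker φ) := by
    rw [hker]
    exact (Submodule.comapSubtypeEquivOfLe (inf_le_left : Z ⊓ K ≤ Z)).symm.finiteDimensional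
  have h2 : FiniteDimensional ℝ ↥(LinearMap.range φ) :=
    FiniteDimensional.finiteDimensional_submodule _
  have h3 := LinearMap.lift_rank_range_add_rank_ker φ
  have h4 : Cardinal.lift (Module.rank ℝ ↥Z) < Cardinal.aleph0 := by
    rw [← h3]
    exact Cardinal.add_lt_aleph0 (Cardinal.lift_lt_aleph0.mpr (Module.rank_lt_aleph0 ℝ _))
      (Cardinal.lift_lt_aleph0.mpr (Module.rank_lt_aleph0 ℝ _))
  rw [Cardinal.lift_lt_aleph0] at h4
  exact (Module.rank_lt_aleph0_iff).mp h4

section LemA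

variable {Y : Type*} [NormedAddCommGroup Y] [NormedSpace ℝ Y] [CompleteSpace Y]

set_option maxHeartbeats 1000000 in
theorem lemA (X : Submodule ℝ Y) (hXclosed : IsClosed (X : Set Y))
    (hQss : ∀ Z : Submodule ℝ Y, IsClosed (Z : Set Y) → ¬ FiniteDimensional ℝ Z →
      ∀ ε : ℝ, 0 < ε → ∃ z ∈ Z, ‖z‖ = 1 ∧ ‖X.mkQ z‖ < ε)
    (Z : Submodule ℝ Y) (hZclosed : IsClosed (Z : Set Y)) (hZinf : ¬ FiniteDimensional ℝ Z)
    (δ : ℝ) (hδ : 0 < δ) :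
    ∃ W : Submodule ℝ Y, W ≤ X ∧ IsClosed (W : Set Y) ∧ ¬ FiniteDimensional ℝ W ∧
      ∀ w ∈ W, ‖w‖ = 1 → ∃ v ∈ Z, ‖v‖ = 1 ∧ ‖w - v‖ < δ := by
  classical
  set δ₀ : ℝ := min δ 1 / 100 with hδ₀def
  have hmin : 0 < min δ 1 := lt_min hδ one_pos
  have hδ₀pos : 0 < δ₀ := by positivity
  have hδ₀le : δ₀ ≤ 1 / 100 := by
    have := min_le_right δ 1; rw [hδ₀def]; linarith
  have hδ₀δ : 6 * δ₀ < δ := by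
    have := min_le_left δ 1; rw [hδ₀def]; linarith
  -- the recursive construction
  set P : (n : ℕ) → ((m : ℕ) → m < n → Y × Y × (Y →L[ℝ] ℝ)) → Y × Y × (Y →L[ℝ] ℝ) → Prop :=
    fun n prev s =>
      s.1 ∈ Z ∧ ‖s.1‖ = 1 ∧ (∀ m (h : m < n), (prev m h).2.2 s.1 = 0) ∧
      s.2.1 ∈ X ∧ ‖s.1 - s.2.1‖ ≤ δ₀ / 8 ^ (n + 1) ∧ ‖s.2.2‖ ≤ 1 ∧ s.2.2 s.1 = 1
    with hPdef
  set seq : ℕ → Y × Y × (Y →L[ℝ] ℝ) := natRecChoice (0, 0, 0) P with hseqdef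
  have hstep : ∀ n, ∃ t, P n (fun m _ => seq m) t := by
    intro n
    set Z' : Submodule ℝ Y := Z ⊓ ⨅ i : Fin n, LinearMap.ker (((seq i).2.2 : Y →ₗ[ℝ] ℝ)) with hZ'def
    have hZ'closed : IsClosed (Z' : Set Y) := by
      rw [hZ'def, Submodule.coe_inf]
      exact hZclosed.inter (by
        rw [Submodule.coe_iInf]
        exact isClosed_iInter fun i => ContinuousLinearMap.isClosed_ker _)
    have hZ'inf : ¬ FiniteDimensional ℝ Z' := infdim_inf_ker Z hZinf n _
    have hεpos : 0 < δ₀ / 8 ^ (n + 1) := by positivity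
    obtain ⟨z, hzZ', hz1, hzq⟩ := hQss Z' hZ'closed hZ'inf _ hεpos
    -- find a representative close to `z`
    obtain ⟨m, hmeq, hmlt⟩ := Submodule.Quotient.norm_mk_lt (X.mkQ z)
      (show (0:ℝ) < δ₀ / 8 ^ (n + 1) - ‖X.mkQ z‖ by linarith)
    have hmX : z - m ∈ X := by
      rw [Submodule.mkQ_apply, Submodule.Quotient.eq] at hmeq
      simpa using X.neg_mem hmeq
    -- a norming functional
    have hz0 : z ≠ 0 := by intro h; rw [h, norm_zero] at hz1; norm_num at hz1
    obtain ⟨g, hg1, hgz⟩ := exists_dual_vector ℝ z (norm_ne_zero_iff.mpr hz0)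
    refine ⟨(z, z - m, g), hzZ'.1, hz1, ?_, hmX, ?_, le_of_eq hg1, ?_⟩
    · intro k hk
      have h2 := (Submodule.mem_inf.mp hzZ').2
      rw [Submodule.mem_iInf] at h2
      simpa using h2 ⟨k, hk⟩
    · have : z - (z - m) = m := by abel
      rw [this]; linarith
    · rw [hgz, hz1]; norm_num
  have hP : ∀ n, P n (fun m _ => seq m) (seq n) := fun n =>
    natRecChoice_spec (0, 0, 0) P n (hstep n)
  set z : ℕ → Y := fun n => (seq n).1 with hzdef
  set x : ℕ → Y := fun n => (seq n).2.1 with hxdef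
  set f : ℕ → (Y →L[ℝ] ℝ) := fun n => (seq n).2.2 with hfdef
  have hzZ : ∀ n, z n ∈ Z := fun n => (hP n).1
  have hz1 : ∀ n, ‖z n‖ = 1 := fun n => (hP n).2.1
  have horto : ∀ m n, m < n → f m (z n) = 0 := fun m n h => (hP n).2.2.1 m h
  have hxX : ∀ n, x n ∈ X := fun n => (hP n).2.2.2.1
  have hclose : ∀ n, ‖z n - x n‖ ≤ δ₀ / 8 ^ (n + 1) := fun n => (hP n).2.2.2.2.1
  have hf1 : ∀ n, ‖f n‖ ≤ 1 := fun n => (hP n).2.2.2.2.2.1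
  have hfz : ∀ n, f n (z n) = 1 := fun n => (hP n).2.2.2.2.2.2
  -- coefficient bound
  have hcoef : ∀ N (a : ℕ → ℝ) (m : ℕ), m < N →
      |a m| ≤ 2 ^ m * ‖∑ i ∈ Finset.range N, a i • z i‖ := by
    intro N a m
    induction m using Nat.strong_induction_on with
    | _ m ih =>
      intro hm
      set v : Y := ∑ i ∈ Finset.range N, a i • z i with hvdef
      have hfv : f m v = ∑ i ∈ Finset.range N, a i * f m (z i) := by
        rw [hvdef, map_sum]
        exact Finset.sum_congr rfl fun i _ => by rw [map_smul]; rfl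
      have hsub : ∑ i ∈ Finset.range N, a i * f m (z i)
          = ∑ i ∈ Finset.range (m + 1), a i * f m (z i) := by
        refine (Finset.sum_subset (Finset.range_subset_range.2 (by omega)) ?_).symm
        intro i hi hni
        rw [Finset.mem_range] at hi hni
        rw [horto m i (by omega), mul_zero]
      have hsucc : ∑ i ∈ Finset.range (m + 1), a i * f m (z i)
          = (∑ i ∈ Finset.range m, a i * f m (z i)) + a m := by
        rw [Finset.sum_range_succ, hfz m, mul_one]
      have ham : a m = f m v - ∑ i ∈ Finset.range m, a i * f m (z i) := by
        rw [hfv, hsub, hsucc]; ring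
      have hfvle : |f m v| ≤ ‖v‖ := by
        calc |f m v| ≤ ‖f m‖ * ‖v‖ := (f m).le_opNorm v
        _ ≤ 1 * ‖v‖ := by
          have := norm_nonneg v
          exact mul_le_mul_of_nonneg_right (hf1 m) this
        _ = ‖v‖ := one_mul _
      have hterm : ∀ i ∈ Finset.range m, |a i * f m (z i)| ≤ 2 ^ i * ‖v‖ := by
        intro i hi
        rw [Finset.mem_range] at hi
        have h1 : |f m (z i)| ≤ 1 := by
          calc |f m (z i)| ≤ ‖f m‖ * ‖z i‖ := (f m).le_opNorm _
          _ ≤ 1 * 1 := by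
            apply mul_le_mul (hf1 m) (le_of_eq (hz1 i)) (norm_nonneg _) zero_le_one
          _ = 1 := one_mul _
        calc |a i * f m (z i)| = |a i| * |f m (z i)| := abs_mul _ _
        _ ≤ (2 ^ i * ‖v‖) * 1 := by
          apply mul_le_mul (ih i hi (by omega)) h1 (abs_nonneg _)
          positivity
        _ = 2 ^ i * ‖v‖ := mul_one _
      have hsum : |∑ i ∈ Finset.range m, a i * f m (z i)| ≤ (2 ^ m - 1) * ‖v‖ := by
        calc |∑ i ∈ Finset.range m, a i * f m (z i)|
            ≤ ∑ i ∈ Finset.range m, |a i * f m (z i)| := Finset.abs_sum_le_sum_abs _ _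
        _ ≤ ∑ i ∈ Finset.range m, 2 ^ i * ‖v‖ := Finset.sum_le_sum hterm
        _ = (∑ i ∈ Finset.range m, (2:ℝ) ^ i) * ‖v‖ := by rw [Finset.sum_mul]
        _ = (2 ^ m - 1) * ‖v‖ := by
          rw [geom_sum_eq (by norm_num : (2:ℝ) ≠ 1)]
          norm_num
      calc |a m| ≤ |f m v| + |∑ i ∈ Finset.range m, a i * f m (z i)| := by
            rw [ham]; exact abs_sub _ _
      _ ≤ ‖v‖ + (2 ^ m - 1) * ‖v‖ := add_le_add hfvle hsum
      _ = 2 ^ m * ‖v‖ := by ring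
  -- perturbation estimate
  have hpert : ∀ N (a : ℕ → ℝ),
      ‖(∑ i ∈ Finset.range N, a i • z i) - ∑ i ∈ Finset.range N, a i • x i‖
        ≤ δ₀ * ‖∑ i ∈ Finset.range N, a i • z i‖ := by
    intro N a
    set v : Y := ∑ i ∈ Finset.range N, a i • z i with hvdef
    have hdiff : v - (∑ i ∈ Finset.range N, a i • x i)
        = ∑ i ∈ Finset.range N, a i • (z i - x i) := by
      rw [hvdef, ← Finset.sum_sub_distrib]
      exact Finset.sum_congr rfl fun i _ => by rw [smul_sub]
    rw [hdiff]
    have hterm : ∀ i ∈ Finset.range N, ‖a i • (z i - x i)‖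
        ≤ (δ₀ / 8 * (1 / 4) ^ i) * ‖v‖ := by
      intro i hi
      rw [Finset.mem_range] at hi
      rw [norm_smul, Real.norm_eq_abs]
      calc |a i| * ‖z i - x i‖ ≤ (2 ^ i * ‖v‖) * (δ₀ / 8 ^ (i + 1)) := by
            apply mul_le_mul (hcoef N a i hi) (hclose i) (norm_nonneg _)
            positivity
      _ = (δ₀ / 8 * (1 / 4) ^ i) * ‖v‖ := by
            have h8 : (8:ℝ) ^ i = 2 ^ i * 4 ^ i := by
              rw [← mul_pow]; norm_num
            have h2 : (2:ℝ) ^ i ≠ 0 := by positivity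
            have h4 : (4:ℝ) ^ i ≠ 0 := by positivity
            rw [pow_succ, h8, div_pow]
            field_simp
            ring
    calc ‖∑ i ∈ Finset.range N, a i • (z i - x i)‖
        ≤ ∑ i ∈ Finset.range N, ‖a i • (z i - x i)‖ := norm_sum_le _ _
    _ ≤ ∑ i ∈ Finset.range N, (δ₀ / 8 * (1 / 4) ^ i) * ‖v‖ := Finset.sum_le_sum hterm
    _ = (δ₀ / 8) * (∑ i ∈ Finset.range N, (1 / 4 : ℝ) ^ i) * ‖v‖ := by
        simp only [Finset.mul_sum, Finset.sum_mul]
    _ ≤ (δ₀ / 8) * (4 / 3) * ‖v‖ := by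
        apply mul_le_mul_of_nonneg_right _ (norm_nonneg _)
        apply mul_le_mul_of_nonneg_left _ (by positivity)
        rw [geom_sum_eq (by norm_num : (1/4 : ℝ) ≠ 1)]
        have h14 : (0:ℝ) ≤ (1/4 : ℝ) ^ N := by positivity
        have he : ((1/4:ℝ) ^ N - 1) / ((1/4:ℝ) - 1) = (1 - (1/4:ℝ) ^ N) * (4/3) := by
          ring
        rw [he]
        nlinarith
    _ ≤ δ₀ * ‖v‖ := by
        apply mul_le_mul_of_nonneg_right _ (norm_nonneg _)
        nlinarith
  -- linear independence of the x's
  have hli : LinearIndependent ℝ x := by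
    rw [linearIndependent_iff']
    intro s g hsum i hi
    set N : ℕ := s.sup id + 1 with hNdef
    have hsN : s ⊆ Finset.range N := by
      intro j hj
      rw [Finset.mem_range, hNdef]
      exact Nat.lt_succ_of_le (Finset.le_sup (f := id) hj)
    set a : ℕ → ℝ := fun j => if j ∈ s then g j else 0 with hadef
    have hu0 : ∑ j ∈ Finset.range N, a j • x j = 0 := by
      rw [← Finset.sum_subset hsN (fun j _ hj => by simp [hadef, hj])]
      rw [← hsum]
      exact Finset.sum_congr rfl fun j hj => by simp [hadef, hj]
    set v : Y := ∑ j ∈ Finset.range N, a j • z j with hvdef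
    have hv : ‖v‖ ≤ δ₀ * ‖v‖ := by
      have h := hpert N a
      rw [hu0, sub_zero, ← hvdef] at h
      exact h
    have h1 : δ₀ * ‖v‖ ≤ (1/100) * ‖v‖ :=
      mul_le_mul_of_nonneg_right hδ₀le (norm_nonneg v)
    have hv0 : ‖v‖ = 0 := le_antisymm (by linarith) (norm_nonneg v)
    have hai : |a i| = 0 := by
      have h := hcoef N a i (Finset.mem_range.mp (hsN hi))
      rw [← hvdef, hv0, mul_zero] at h
      exact le_antisymm h (abs_nonneg _)
    simpa [hadef, hi] using abs_eq_zero.mp hai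
  -- the subspace W
  refine ⟨(Submodule.span ℝ (Set.range x)).topologicalClosure, ?_, ?_, ?_, ?_⟩
  · apply Submodule.topologicalClosure_minimal _ _ hXclosed
    rw [Submodule.span_le]
    rintro _ ⟨n, rfl⟩
    exact hxX n
  · exact Submodule.isClosed_topologicalClosure _
  · intro hFD
    have hspanFD : FiniteDimensional ℝ (Submodule.span ℝ (Set.range x)) :=
      Submodule.finiteDimensional_of_le (Submodule.le_topologicalClosure _)
    let x' : ℕ → ↥(Submodule.span ℝ (Set.range x)) :=
      fun n => ⟨x n, Submodule.subset_span (Set.mem_range_self n)⟩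
    have hli' : LinearIndependent ℝ x' := by
      apply LinearIndependent.of_comp (Submodule.span ℝ (Set.range x)).subtype
      have hcomp : (Submodule.span ℝ (Set.range x)).subtype ∘ x' = x := rfl
      rw [hcomp]
      exact hli
    haveI : IsNoetherian ℝ ↥(Submodule.span ℝ (Set.range x)) :=
      IsNoetherian.iff_fg.mpr hspanFD
    have hfin : Finite ℕ := hli'.finite_of_isNoetherian
    exact (not_finite_iff_infinite.mpr inferInstance) hfin
  -- sphere approximation
  · intro w hw hw1
    have hwcl : (w : Y) ∈ closure ((Submodule.span ℝ (Set.range x)) : Set Y) := by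
      rw [← Submodule.topologicalClosure_coe]
      exact hw
    rw [Metric.mem_closure_iff] at hwcl
    obtain ⟨u, huspan, hwu⟩ := hwcl δ₀ hδ₀pos
    rw [dist_eq_norm] at hwu
    -- write u as a finite combination
    obtain ⟨c, hc⟩ := (Finsupp.mem_span_range_iff_exists_finsupp).mp huspan
    set N : ℕ := c.support.sup id + 1 with hNdef
    have hsN : c.support ⊆ Finset.range N := by
      intro j hj
      rw [Finset.mem_range, hNdef]
      exact Nat.lt_succ_of_le (Finset.le_sup (f := id) hj)
    have hu : ∑ j ∈ Finset.range N, c j • x j = u := by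
      rw [← hc, Finsupp.sum]
      exact (Finset.sum_subset hsN (fun j _ hj => by
        rw [Finsupp.notMem_support_iff.mp hj, zero_smul])).symm
    have key : ∃ v₀ ∈ Z, ‖v₀ - u‖ ≤ δ₀ * ‖v₀‖ := by
      refine ⟨∑ j ∈ Finset.range N, c j • z j,
        Submodule.sum_mem _ fun j _ => Z.smul_mem _ (hzZ j), ?_⟩
      have h := hpert N c
      rwa [hu] at h
    obtain ⟨v₀, hv₀Z, hpi⟩ := key
    have hunorm : |‖u‖ - 1| ≤ δ₀ := by
      rw [← hw1]
      have := abs_norm_sub_norm_le u w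
      rw [norm_sub_rev] at hwu
      calc |‖u‖ - ‖w‖| ≤ ‖u - w‖ := abs_norm_sub_norm_le u w
      _ ≤ δ₀ := le_of_lt hwu
    have huub : ‖u‖ ≤ 1 + δ₀ := by
      have := abs_le.mp hunorm
      linarith [this.2]
    have hulb : 1 - δ₀ ≤ ‖u‖ := by
      have := abs_le.mp hunorm
      linarith [this.1]
    have hv₀ub : ‖v₀‖ ≤ 2 := by
      have h1 : ‖v₀‖ ≤ ‖u‖ + δ₀ * ‖v₀‖ := by
        calc ‖v₀‖ = ‖u + (v₀ - u)‖ := by congr 1; abel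
        _ ≤ ‖u‖ + ‖v₀ - u‖ := norm_add_le _ _
        _ ≤ ‖u‖ + δ₀ * ‖v₀‖ := by linarith
      have hmul : δ₀ * ‖v₀‖ ≤ (1/100) * ‖v₀‖ :=
        mul_le_mul_of_nonneg_right hδ₀le (norm_nonneg v₀)
      linarith
    have hmul2 : δ₀ * ‖v₀‖ ≤ δ₀ * 2 :=
      mul_le_mul_of_nonneg_left hv₀ub (le_of_lt hδ₀pos)
    have hv₀lb : 1 - 3 * δ₀ ≤ ‖v₀‖ := by
      have h1 : ‖u‖ ≤ ‖v₀‖ + δ₀ * ‖v₀‖ := by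
        calc ‖u‖ = ‖v₀ - (v₀ - u)‖ := by congr 1; abel
        _ ≤ ‖v₀‖ + ‖v₀ - u‖ := norm_sub_le _ _
        _ ≤ ‖v₀‖ + δ₀ * ‖v₀‖ := by linarith
      linarith
    have hv₀pos : 0 < ‖v₀‖ := by linarith
    have hv₀ub' : ‖v₀‖ ≤ 1 + 3 * δ₀ := by
      have h1 : ‖v₀‖ ≤ ‖u‖ + δ₀ * ‖v₀‖ := by
        calc ‖v₀‖ = ‖u + (v₀ - u)‖ := by congr 1; abel
        _ ≤ ‖u‖ + ‖v₀ - u‖ := norm_add_le _ _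
        _ ≤ ‖u‖ + δ₀ * ‖v₀‖ := by linarith
      linarith
    refine ⟨‖v₀‖⁻¹ • v₀, Z.smul_mem _ hv₀Z, ?_, ?_⟩
    · rw [norm_smul, Real.norm_eq_abs, abs_of_pos (inv_pos.mpr hv₀pos)]
      field_simp
    · have hv₀v : ‖v₀ - ‖v₀‖⁻¹ • v₀‖ = |‖v₀‖ - 1| := by
        have h1 : v₀ - ‖v₀‖⁻¹ • v₀ = (1 - ‖v₀‖⁻¹) • v₀ := by
          rw [sub_smul, one_smul]
        rw [h1, norm_smul, Real.norm_eq_abs]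
        rw [← abs_of_pos hv₀pos, ← abs_mul]
        rw [abs_of_pos hv₀pos]
        congr 1
        field_simp
      have habs : |‖v₀‖ - 1| ≤ 3 * δ₀ := by
        rw [abs_le]
        constructor <;> linarith
      calc ‖(w : Y) - ‖v₀‖⁻¹ • v₀‖
          ≤ ‖(w : Y) - u‖ + ‖u - v₀‖ + ‖v₀ - ‖v₀‖⁻¹ • v₀‖ := by
            have := norm_add_le ((w : Y) - u) (u - v₀)
            calc ‖(w : Y) - ‖v₀‖⁻¹ • v₀‖
                = ‖((w : Y) - u) + (u - v₀) + (v₀ - ‖v₀‖⁻¹ • v₀)‖ := by congr 1; abel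
            _ ≤ ‖((w : Y) - u) + (u - v₀)‖ + ‖v₀ - ‖v₀‖⁻¹ • v₀‖ := norm_add_le _ _
            _ ≤ ‖(w : Y) - u‖ + ‖u - v₀‖ + ‖v₀ - ‖v₀‖⁻¹ • v₀‖ := by linarith
      _ < δ := by
          rw [hv₀v, norm_sub_rev u v₀]
          have h3 : ‖v₀ - u‖ ≤ δ₀ * ‖v₀‖ := hpi
          linarith


end LemA

theorem statement1
    {Y : Type*} [NormedAddCommGroup Y] [NormedSpace ℝ Y] [CompleteSpace Y]
    (X : Submodule ℝ Y) (hXclosed : IsClosed (X : Set Y))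
    (hXinf : ¬ FiniteDimensional ℝ X)
    (hXHI : ∀ Z₁ Z₂ : Submodule ℝ Y, Z₁ ≤ X → Z₂ ≤ X →
      IsClosed (Z₁ : Set Y) → IsClosed (Z₂ : Set Y) →
      ¬ FiniteDimensional ℝ Z₁ → ¬ FiniteDimensional ℝ Z₂ →
      SphereDistZero Z₁ Z₂)
    -- the quotient map `Q = X.mkQ : Y → Y/X` is strictly singular
    (hQss : ∀ Z : Submodule ℝ Y, IsClosed (Z : Set Y) → ¬ FiniteDimensional ℝ Z →
      ∀ ε : ℝ, 0 < ε → ∃ z ∈ Z, ‖z‖ = 1 ∧ ‖X.mkQ z‖ < ε)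
    (Z₁ Z₂ : Submodule ℝ Y)
    (hZ₁closed : IsClosed (Z₁ : Set Y)) (hZ₂closed : IsClosed (Z₂ : Set Y))
    (hZ₁inf : ¬ FiniteDimensional ℝ Z₁) (hZ₂inf : ¬ FiniteDimensional ℝ Z₂) :
    SphereDistZero Z₁ Z₂ := by
  intro ε hε
  obtain ⟨W₁, hW₁X, hW₁c, hW₁inf, hW₁⟩ :=
    lemA X hXclosed hQss Z₁ hZ₁closed hZ₁inf (ε / 4) (by linarith)
  obtain ⟨W₂, hW₂X, hW₂c, hW₂inf, hW₂⟩ :=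
    lemA X hXclosed hQss Z₂ hZ₂closed hZ₂inf (ε / 4) (by linarith)
  obtain ⟨w₁, hw₁W, w₂, hw₂W, hw₁1, hw₂1, hww⟩ :=
    hXHI W₁ W₂ hW₁X hW₂X hW₁c hW₂c hW₁inf hW₂inf (ε / 4) (by linarith)
  obtain ⟨v₁, hv₁Z, hv₁1, hv₁⟩ := hW₁ w₁ hw₁W hw₁1
  obtain ⟨v₂, hv₂Z, hv₂1, hv₂⟩ := hW₂ w₂ hw₂W hw₂1
  refine ⟨v₁, hv₁Z, v₂, hv₂Z, hv₁1, hv₂1, ?_⟩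
  have h1 : ‖v₁ - w₁‖ = ‖w₁ - v₁‖ := norm_sub_rev _ _
  calc ‖v₁ - v₂‖ = ‖(v₁ - w₁) + (w₁ - w₂) + (w₂ - v₂)‖ := by congr 1; abel
  _ ≤ ‖(v₁ - w₁) + (w₁ - w₂)‖ + ‖w₂ - v₂‖ := norm_add_le _ _
  _ ≤ ‖v₁ - w₁‖ + ‖w₁ - w₂‖ + ‖w₂ - v₂‖ := by linarith [norm_add_le (v₁ - w₁) (w₁ - w₂)]
  _ < ε := by
      rw [h1]
      have h2 : ‖w₂ - v₂‖ < ε / 4 := hv₂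
      linarith
end

section
/- Let n ≥ 1 and let G = {m_1 < m_2 < ⋯ < m_d} belong to the Schreier family S_n. Let 0 ≤ j ≤ d and let k_1, …, k_j be positive integers with k_1 < 2m_1 < k_2 < 2m_2 < ⋯ < k_j < 2m_j. Then the set {k_1, 2m_1, k_2, 2m_2, …, k_j, 2m_j} ∪ {2m_{j+1}, 2m_{j+2}, …, 2m_d} belongs to the family S_n^f ⊙ A_2. -/
/-- `F < G`: every element of `F` is smaller than every element of `G`. -/
def SuccSets (F G : Finset ℕ) : Prop := ∀ a ∈ F, ∀ b ∈ G, a < b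

/-- minimum of a finite set of naturals (junk value `0` on the empty set). -/
noncomputable def fmin (A : Finset ℕ) : ℕ := sInf (A : Set ℕ)

/-- maximum of a finite set of naturals (junk value `0` on the empty set). -/
noncomputable def fmax (A : Finset ℕ) : ℕ := sSup (A : Set ℕ)

/-- The first Schreier family `S₁`: finite nonempty sets `F` of positive integers
with `#F ≤ min F`. -/
def SchreierOne : Set (Finset ℕ) :=
  {F | F.Nonempty ∧ ∀ m ∈ F, 1 ≤ m ∧ F.card ≤ m}

/-- The first modified Schreier family `S₁ᶠ`: `{1}` together with the finite nonempty sets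
`F` of positive integers with `2·#F ≤ min F`. -/
def SchreierFOne : Set (Finset ℕ) :=
  {F | F = {1} ∨ (F.Nonempty ∧ ∀ m ∈ F, 1 ≤ m ∧ 2 * F.card ≤ m)}

/-- The inductive step producing `S_{n+1}` from `S_n`, with admissibility family `base`:
unions `F₁ ∪ ⋯ ∪ F_k` of successive members of `S` with `{min F₁, …, min F_k} ∈ base`. -/
def schreierStep (base S : Set (Finset ℕ)) : Set (Finset ℕ) :=
  {F | ∃ L : List (Finset ℕ), L ≠ [] ∧ L.Chain' SuccSets ∧ (∀ A ∈ L, A ∈ S) ∧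
      (L.map fmin).toFinset ∈ base ∧ F = L.foldr (· ∪ ·) ∅}

/-- The Schreier families `S_n`, `n ≥ 1` (with `S₀ := ∅` as an unused placeholder). -/
noncomputable def Schreier : ℕ → Set (Finset ℕ)
  | 0 => ∅
  | 1 => SchreierOne
  | n + 2 => schreierStep SchreierOne (Schreier (n + 1))

/-- The modified Schreier families `S_nᶠ`, `n ≥ 1` (with `S₀ᶠ := ∅` as an unused
placeholder). -/
noncomputable def SchreierF : ℕ → Set (Finset ℕ)
  | 0 => ∅
  | 1 => SchreierFOne
  | n + 2 => schreierStep SchreierFOne (SchreierF (n + 1))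

/-- The family `S_nᶠ ⊙ A₂`: unions `F₁ ∪ ⋯ ∪ F_d` of successive nonempty sets with
`#F_i ≤ 2` and `{max F₁, …, max F_d} ∈ S_nᶠ`. -/
noncomputable def SchreierFA2 (n : ℕ) : Set (Finset ℕ) :=
  {F | ∃ L : List (Finset ℕ), L ≠ [] ∧ L.Chain' SuccSets ∧
      (∀ A ∈ L, A.Nonempty ∧ A.card ≤ 2) ∧
      (L.map fmax).toFinset ∈ SchreierF n ∧ F = L.foldr (· ∪ ·) ∅}

/-! ### Auxiliary lemmas -/

lemma mem_foldrUnion {l : List (Finset ℕ)} {x : ℕ} :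
    x ∈ l.foldr (· ∪ ·) ∅ ↔ ∃ A ∈ l, x ∈ A := by
  induction l with
  | nil => simp
  | cons A t ih => simp [ih]

lemma image_foldrUnion (f : ℕ → ℕ) (l : List (Finset ℕ)) :
    (l.foldr (· ∪ ·) ∅).image f = (l.map (·.image f)).foldr (· ∪ ·) ∅ := by
  induction l with
  | nil => simp
  | cons A t ih => simp [Finset.image_union, ih]

lemma fmin_mem {A : Finset ℕ} (h : A.Nonempty) : fmin A ∈ A := by
  have : (A : Set ℕ).Nonempty := by exact_mod_cast h
  exact_mod_cast Nat.sInf_mem this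

lemma fmin_le {A : Finset ℕ} {a : ℕ} (ha : a ∈ A) : fmin A ≤ a :=
  Nat.sInf_le (by exact_mod_cast ha)

lemma fmin_image2 {A : Finset ℕ} (h : A.Nonempty) :
    fmin (A.image (fun x => 2 * x)) = 2 * fmin A := by
  have h2 : (A.image (fun x => 2 * x)).Nonempty := h.image _
  apply le_antisymm
  · exact fmin_le (Finset.mem_image_of_mem _ (fmin_mem h))
  · have := fmin_mem h2
    rw [Finset.mem_image] at this
    obtain ⟨a, ha, heq⟩ := this
    rw [← heq]
    exact Nat.mul_le_mul_left 2 (fmin_le ha)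

lemma fmax_singleton (a : ℕ) : fmax {a} = a := by
  simp [fmax]

lemma fmax_pair {a b : ℕ} (h : a ≤ b) : fmax {a, b} = b := by
  have : (({a, b} : Finset ℕ) : Set ℕ) = {a, b} := by simp
  rw [fmax, this, csSup_pair]
  exact sup_eq_right.mpr h

lemma schreier_nonempty : ∀ n, ∀ G ∈ Schreier n, G.Nonempty := by
  intro n
  induction n using Nat.strong_induction_on with
  | _ n ih =>
    match n with
    | 0 => intro G hG; simp [Schreier] at hG
    | 1 => intro G hG; exact hG.1
    | n + 2 =>
      rintro G ⟨L, hne, -, hmem, -, rfl⟩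
      obtain ⟨A, t, rfl⟩ := List.exists_cons_of_ne_nil hne
      have hA : A.Nonempty := ih (n + 1) (by omega) A (hmem A (List.mem_cons_self))
      obtain ⟨x, hx⟩ := hA
      exact ⟨x, mem_foldrUnion.mpr ⟨A, List.mem_cons_self, hx⟩⟩

lemma doublingS1 {B : Finset ℕ} (hB : B ∈ SchreierOne) :
    B.image (fun x => 2 * x) ∈ SchreierFOne := by
  refine Or.inr ⟨hB.1.image _, ?_⟩
  intro x hx
  rw [Finset.mem_image] at hx
  obtain ⟨a, ha, rfl⟩ := hx
  have h := hB.2 a ha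
  have hcard : (B.image (fun x => 2 * x)).card = B.card :=
    Finset.card_image_of_injective _ (fun x y hxy => by omega)
  constructor
  · omega
  · rw [hcard]; omega

lemma doubling : ∀ n, ∀ G ∈ Schreier n, G.image (fun x => 2 * x) ∈ SchreierF n := by
  intro n
  induction n using Nat.strong_induction_on with
  | _ n ih =>
    match n with
    | 0 => intro G hG; simp [Schreier] at hG
    | 1 => intro G hG; exact doublingS1 hG
    | n + 2 =>
      rintro G ⟨L, hne, hch, hmem, hbase, rfl⟩
      refine ⟨L.map (·.image (fun x => 2 * x)), by simpa using hne, ?_, ?_, ?_, ?_⟩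
      · refine List.isChain_map_of_isChain _ (fun A B hAB => ?_) hch
        intro a ha b hb
        rw [Finset.mem_image] at ha hb
        obtain ⟨a', ha', rfl⟩ := ha
        obtain ⟨b', hb', rfl⟩ := hb
        have := hAB a' ha' b' hb'
        omega
      · intro A hA
        rw [List.mem_map] at hA
        obtain ⟨B, hB, rfl⟩ := hA
        exact ih (n + 1) (by omega) B (hmem B hB)
      · have hmap : (L.map (·.image (fun x => 2 * x))).map fmin
            = (L.map fmin).map (fun x => 2 * x) := by
          rw [List.map_map, List.map_map]
          refine List.map_congr_left (fun A hA => ?_)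
          exact fmin_image2 (schreier_nonempty (n + 1) A (hmem A hA))
        have htf : ((L.map (·.image (fun x => 2 * x))).map fmin).toFinset
            = (L.map fmin).toFinset.image (fun x => 2 * x) := by
          rw [hmap]
          ext x
          simp
        rw [htf]
        exact doublingS1 hbase
      · exact image_foldrUnion _ _

theorem statement5 (n : ℕ) (hn : 1 ≤ n) (d : ℕ) (m : ℕ → ℕ)
    (hm : ∀ i, i + 1 < d → m i < m (i + 1))
    (hG : (Finset.range d).image m ∈ Schreier n)
    (j : ℕ) (hj : j ≤ d) (k : ℕ → ℕ)
    (hkpos : ∀ i < j, 1 ≤ k i)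
    (hkm : ∀ i < j, k i < 2 * m i)
    (hmk : ∀ i, i + 1 < j → 2 * m i < k (i + 1)) :
    ((Finset.range j).image k ∪ (Finset.range d).image (fun i => 2 * m i))
      ∈ SchreierFA2 n := by
  have hd : 0 < d := by
    obtain ⟨x, hx⟩ := schreier_nonempty n _ hG
    rw [Finset.mem_image] at hx
    obtain ⟨i, hi, -⟩ := hx
    rw [Finset.mem_range] at hi
    omega
  set F : ℕ → Finset ℕ := fun i => if i < j then {k i, 2 * m i} else {2 * m i} with hF
  have hFmax : ∀ i, fmax (F i) = 2 * m i := by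
    intro i
    by_cases hij : i < j
    · simp only [hF, if_pos hij]
      exact fmax_pair (le_of_lt (hkm i hij))
    · simp only [hF, if_neg hij]
      exact fmax_singleton _
  have hFmem : ∀ i x, x ∈ F i ↔ (i < j ∧ x = k i) ∨ x = 2 * m i := by
    intro i x
    by_cases hij : i < j <;> simp [hF, hij]
  refine ⟨(List.range d).map F, ?_, ?_, ?_, ?_, ?_⟩
  · simp [List.range_eq_nil]; omega
  · unfold List.Chain'; rw [List.isChain_map]
    obtain ⟨d', rfl⟩ := Nat.exists_eq_succ_of_ne_zero (by omega : d ≠ 0)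
    rw [List.isChain_range_succ]
    intro i hi
    intro a ha b hb
    rw [hFmem] at ha hb
    simp only [Nat.succ_eq_add_one] at hb
    have h1 : a ≤ 2 * m i := by
      rcases ha with ⟨hij, rfl⟩ | rfl
      · exact le_of_lt (hkm i hij)
      · exact le_refl _
    have h2 : 2 * m i < b := by
      rcases hb with ⟨hij, rfl⟩ | rfl
      · exact hmk i hij
      · have := hm i (by omega); omega
    omega
  · intro A hA
    rw [List.mem_map] at hA
    obtain ⟨i, -, rfl⟩ := hA
    by_cases hij : i < j
    · simp only [hF, if_pos hij]
      exact ⟨Finset.insert_nonempty _ _, Finset.card_insert_le _ _ |>.trans (by simp)⟩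
    · simp only [hF, if_neg hij]
      exact ⟨Finset.singleton_nonempty _, by simp⟩
  · have htf : (((List.range d).map F).map fmax).toFinset
        = ((Finset.range d).image m).image (fun x => 2 * x) := by
      ext x
      simp only [List.mem_toFinset, List.mem_map, List.mem_range, Finset.mem_image,
        Finset.mem_range]
      constructor
      · rintro ⟨A, ⟨i, hi, rfl⟩, rfl⟩
        exact ⟨m i, ⟨i, hi, rfl⟩, (hFmax i).symm⟩
      · rintro ⟨y, ⟨i, hi, rfl⟩, rfl⟩
        exact ⟨F i, ⟨i, hi, rfl⟩, hFmax i⟩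
    rw [htf]
    exact doubling n _ hG
  · ext x
    rw [mem_foldrUnion]
    simp only [Finset.mem_union, Finset.mem_image, Finset.mem_range, List.mem_map,
      List.mem_range]
    constructor
    · rintro (⟨i, hi, rfl⟩ | ⟨i, hi, rfl⟩)
      · exact ⟨F i, ⟨i, by omega, rfl⟩, (hFmem i _).mpr (Or.inl ⟨hi, rfl⟩)⟩
      · exact ⟨F i, ⟨i, hi, rfl⟩, (hFmem i _).mpr (Or.inr rfl)⟩
    · rintro ⟨A, ⟨i, hi, rfl⟩, hx⟩
      rw [hFmem] at hx
      rcases hx with ⟨hij, rfl⟩ | rfl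
      · exact Or.inl ⟨i, hij, rfl⟩
      · exact Or.inr ⟨i, hi, rfl⟩
end

section
/- Special sequences defined through an injective coding function have the tree property: let ((f_i)_{i=1}^{k'}, (w_i)_{i=1}^{k'}) be a (2j'−1)-special sequence and ((g_i)_{i=1}^{l'}, (v_i)_{i=1}^{l'}) be a (2j''−1)-special sequence. If m_{w_k} = m_{v_l} for some k ≤ k' and l ≤ l', then k = l and f_i = g_i for every i < k. Moreover, if additionally f_k ≠ g_k, then m_{w_{k+s}} ≠ m_{v_{k+t}} for all s, t ≥ 1 with k+s ≤ k' and k+t ≤ l'. -/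
/-- The sequence `m_0 = 2`, `m_{j+1} = m_j ^ 5`. -/
def mseq : ℕ → ℕ
  | 0 => 2
  | j + 1 => (mseq j) ^ 5

lemma two_le_mseq (j : ℕ) : 2 ≤ mseq j := by
  induction j with
  | zero => rfl
  | succ n ih =>
    calc 2 ≤ mseq n := ih
    _ ≤ (mseq n) ^ 5 := Nat.le_self_pow (by norm_num) _

lemma sseq_exists (j : ℕ) : ∃ s : ℕ, 1 ≤ s ∧ (mseq (j + 1)) ^ 3 ≤ 2 ^ s := by
  refine ⟨(mseq (j + 1)) ^ 3, ?_, ?_⟩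
  · exact Nat.one_le_pow _ _ (lt_of_lt_of_le (by norm_num) (two_le_mseq (j + 1)))
  · exact (Nat.lt_two_pow_self ..).le

/-- `s_j` is the least positive integer with `2 ^ s_j ≥ m_{j+1} ^ 3`. -/
def sseq (j : ℕ) : ℕ := Nat.find (sseq_exists j)

/-- The sequence `n_0 = 4`, `n_{j+1} = (12 n_j) ^ {s_j}`. -/
def nseq : ℕ → ℕ
  | 0 => 4
  | j + 1 => (12 * nseq j) ^ (sseq j)

/-- `f < g` for finitely supported functions: the supports are successive. -/
def QSucc (f g : ℕ+ →₀ ℚ) : Prop :=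
  ∀ a ∈ f.support, ∀ b ∈ g.support, a < b

/-- `Q_s`: the set of finite sequences `(f₁, …, f_l)`, `l ≥ 1`, of nonzero finitely
supported rational-valued functions on the positive integers with `f₁ < f₂ < ⋯ < f_l`. -/
def Qs : Set (List (ℕ+ →₀ ℚ)) :=
  {l | l ≠ [] ∧ (∀ f ∈ l, f ≠ 0) ∧ l.Chain' QSucc}

/-- `((f i)_{i<k}, (w i)_{i<k})` is a `(2j-1)`-special sequence (with respect to a coding
function `σ` and the set `Ω₁`): `1 ≤ k ≤ n_{2j-1}`, `(f 0, …, f (k-1)) ∈ Q_s`, the first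
weight index is `w 0 = 2j₁` for some `j₁ ∈ Ω₁` with `m_{2j₁} ≥ n_{2j-1}²`, and
`w (i+1) = σ (f 0, …, f i)` for every `i` with `i + 1 < k`. -/
def IsSpecialSeq (σ : List (ℕ+ →₀ ℚ) → ℕ) (Ω₁ : Set ℕ)
    (j k : ℕ) (f : ℕ → (ℕ+ →₀ ℚ)) (w : ℕ → ℕ) : Prop :=
  1 ≤ j ∧ 1 ≤ k ∧ k ≤ nseq (2 * j - 1) ∧
  ((List.range k).map f) ∈ Qs ∧
  (∃ j₁ ∈ Ω₁, w 0 = 2 * j₁ ∧ (nseq (2 * j - 1)) ^ 2 ≤ mseq (2 * j₁)) ∧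
  (∀ i, i + 1 < k → w (i + 1) = σ ((List.range (i + 1)).map f))

lemma mseq_injective : Function.Injective mseq := by
  apply StrictMono.injective
  apply strictMono_nat_of_lt_succ
  intro n
  have h2 := two_le_mseq n
  show mseq n < mseq n ^ 5
  calc mseq n = mseq n ^ 1 := (pow_one _).symm
  _ < mseq n ^ 5 := Nat.pow_lt_pow_right (by omega) (by norm_num)

lemma qs_prefix {L L' : List (ℕ+ →₀ ℚ)} (hL : L ∈ Qs) (hp : L' <+: L) (hne : L' ≠ []) :
    L' ∈ Qs :=
  ⟨hne, fun x hx => hL.2.1 x (hp.subset hx), hL.2.2.prefix hp⟩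

lemma range_map_prefix {α : Type*} (f : ℕ → α) {m n : ℕ} (h : m ≤ n) :
    (List.range m).map f <+: (List.range n).map f := by
  have h1 := List.take_prefix m (List.range n)
  rw [List.take_range, min_eq_left h] at h1
  exact h1.map f

lemma range_map_eq {α : Type*} {f g : ℕ → α} {n n' : ℕ}
    (h : (List.range n).map f = (List.range n').map g) :
    n = n' ∧ ∀ i < n, f i = g i := by
  have hn : n = n' := by simpa using congrArg List.length h
  refine ⟨hn, fun i hi => ?_⟩
  have h2 := congrArg (·[i]?) h
  simp [List.getElem?_map, List.getElem?_range, hi, hn ▸ hi] at h2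
  exact h2

lemma special_prefix_mem {σ : List (ℕ+ →₀ ℚ) → ℕ} {Ω₁ : Set ℕ} {j k' : ℕ}
    {f : ℕ → (ℕ+ →₀ ℚ)} {w : ℕ → ℕ} (h : IsSpecialSeq σ Ω₁ j k' f w)
    {m : ℕ} (h1 : 1 ≤ m) (h2 : m ≤ k') : (List.range m).map f ∈ Qs := by
  refine qs_prefix h.2.2.2.1 (range_map_prefix f h2) ?_
  intro he
  have := congrArg List.length he
  simp at this
  omega

theorem statement7 (Ω₁ Ω₂ : Set ℕ) (hΩ₁ : Ω₁.Infinite) (hΩ₂ : Ω₂.Infinite)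
    (hdisj : Disjoint Ω₁ Ω₂)
    (σ : List (ℕ+ →₀ ℚ) → ℕ)
    (hσinj : Set.InjOn σ Qs)
    (hσran : ∀ l ∈ Qs, ∃ i ∈ Ω₂, σ l = 2 * i)
    (j' j'' k' l' : ℕ) (f g : ℕ → (ℕ+ →₀ ℚ)) (w v : ℕ → ℕ)
    (hfw : IsSpecialSeq σ Ω₁ j' k' f w)
    (hgv : IsSpecialSeq σ Ω₁ j'' l' g v)
    (k l : ℕ) (hk : k < k') (hl : l < l')
    (hweq : mseq (w k) = mseq (v l)) :
    (k = l ∧ ∀ i < k, f i = g i) ∧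
    (f k ≠ g k →
      ∀ s t : ℕ, 1 ≤ s → 1 ≤ t → k + s < k' → k + t < l' →
        mseq (w (k + s)) ≠ mseq (v (k + t))) := by
  have hwσ := hfw.2.2.2.2.2
  have hvσ := hgv.2.2.2.2.2
  obtain ⟨j₁, hj₁, hw0, -⟩ := hfw.2.2.2.2.1
  obtain ⟨j₂, hj₂, hv0, -⟩ := hgv.2.2.2.2.1
  have hwv : w k = v l := mseq_injective hweq
  constructor
  · -- first part
    rcases Nat.eq_zero_or_pos k with hk0 | hkpos
    · rcases Nat.eq_zero_or_pos l with hl0 | hlpos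
      · subst hk0; subst hl0
        exact ⟨rfl, fun i hi => absurd hi (by omega)⟩
      · exfalso
        obtain ⟨l₀, rfl⟩ : ∃ l₀, l = l₀ + 1 := ⟨l - 1, by omega⟩
        have hQ := special_prefix_mem hgv (by omega) hl.le
        obtain ⟨i, hi, hσi⟩ := hσran _ hQ
        have : w 0 = 2 * i := by rw [hk0] at hwv; rw [hwv, hvσ l₀ hl, hσi]
        rw [hw0] at this
        have : j₁ = i := by omega
        exact Set.disjoint_left.mp hdisj hj₁ (this ▸ hi)
    · rcases Nat.eq_zero_or_pos l with hl0 | hlpos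
      · exfalso
        obtain ⟨k₀, rfl⟩ : ∃ k₀, k = k₀ + 1 := ⟨k - 1, by omega⟩
        have hQ := special_prefix_mem hfw (by omega) hk.le
        obtain ⟨i, hi, hσi⟩ := hσran _ hQ
        have : v 0 = 2 * i := by rw [hl0] at hwv; rw [← hwv, hwσ k₀ hk, hσi]
        rw [hv0] at this
        have : j₂ = i := by omega
        exact Set.disjoint_left.mp hdisj hj₂ (this ▸ hi)
      · obtain ⟨k₀, rfl⟩ : ∃ k₀, k = k₀ + 1 := ⟨k - 1, by omega⟩
        obtain ⟨l₀, rfl⟩ : ∃ l₀, l = l₀ + 1 := ⟨l - 1, by omega⟩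
        have hQf := special_prefix_mem hfw (by omega) hk.le
        have hQg := special_prefix_mem hgv (by omega) hl.le
        have hσeq : σ ((List.range (k₀ + 1)).map f) = σ ((List.range (l₀ + 1)).map g) := by
          rw [← hwσ k₀ hk, ← hvσ l₀ hl, hwv]
        have hlist := hσinj hQf hQg hσeq
        obtain ⟨hlen, hent⟩ := range_map_eq hlist
        exact ⟨hlen, fun i hi => hent i (by omega)⟩
  · -- second part
    intro hne s t hs ht hsk htl heq
    have h1 : w (k + s) = v (k + t) := mseq_injective heq
    obtain ⟨a, ha⟩ : ∃ a, k + s = a + 1 := ⟨k + s - 1, by omega⟩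
    obtain ⟨b, hb⟩ : ∃ b, k + t = b + 1 := ⟨k + t - 1, by omega⟩
    have hQf := special_prefix_mem hfw (by omega) hsk.le
    have hQg := special_prefix_mem hgv (by omega) htl.le
    have hσeq : σ ((List.range (k + s)).map f) = σ ((List.range (k + t)).map g) := by
      rw [ha, hb, ← hwσ a (ha ▸ hsk), ← hvσ b (hb ▸ htl), ← ha, ← hb, h1]
    have hlist := hσinj hQf hQg hσeq
    obtain ⟨hlen, hent⟩ := range_map_eq hlist
    exact hne (hent k (by omega))
end

section
/- Let W ⊆ c₀₀ satisfy: (i) ±e_n^* ∈ W for all n; (ii) every f ∈ W is rational-valued and satisfies |f(n)| ≤ 1 for all n; (iii) W is symmetric (f ∈ W implies −f ∈ W) and Ef ∈ W for every f ∈ W and every interval E; (iv) W is closed under rational convex combinations; and (v) for every linear functional F on c₀₀ with |F(y)| ≤ ‖y‖_W for all y ∈ c₀₀, and every η > 0, there exists x^* ∈ W with |F(y) − x^*(y)| ≤ η‖y‖_W for all y ∈ c₀₀. Let ε > 0 and let x ∈ c₀₀ with ‖x‖_W = 1 be such that inf{‖x − y‖_W : y ∈ c₀₀ with supp y contained in the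 even numbers} > ε. Then for every rational δ ∈ (0, ε) there exists f ∈ W such that f(2n) = 0 for every n and f(x) > ε − δ. -/
open scoped Classical Pointwise

/-- The action `f(x) = Σ_n f(n) x(n)` of a finitely supported functional on a finitely
supported vector. -/
noncomputable def dotp (f x : ℕ+ →₀ ℝ) : ℝ := ∑ n ∈ f.support, f n * x n

/-- The norm `‖x‖_W = sup {f(x) : f ∈ W}` induced by a norming set `W ⊆ c₀₀`. -/
noncomputable def normW (W : Set (ℕ+ →₀ ℝ)) (x : ℕ+ →₀ ℝ) : ℝ :=
  sSup {r : ℝ | ∃ f ∈ W, r = dotp f x}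

/-- `Ef`: the restriction of `f` to a set `E` of positive integers (pointwise product
with the indicator of `E`). -/
noncomputable def restr (E : Set ℕ+) (f : ℕ+ →₀ ℝ) : ℕ+ →₀ ℝ :=
  f.filter (· ∈ E)

lemma dotp_eq_sum (f x : ℕ+ →₀ ℝ) (s : Finset ℕ+) (h : f.support ∩ x.support ⊆ s) :
    dotp f x = ∑ n ∈ s, f n * x n := by
  have h1 : dotp f x = ∑ n ∈ f.support ∪ s, f n * x n := by
    refine Finset.sum_subset Finset.subset_union_left (fun n _ hn => ?_)
    rw [Finsupp.notMem_support_iff.mp hn, zero_mul]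
  rw [h1]
  refine (Finset.sum_subset Finset.subset_union_right (fun n hn hns => ?_)).symm
  rcases Finset.mem_union.mp hn with hf | hs
  · by_cases hxn : x n = 0
    · rw [hxn, mul_zero]
    · exact absurd (h (Finset.mem_inter.mpr ⟨hf, Finsupp.mem_support_iff.mpr hxn⟩)) hns
  · exact absurd hs hns

lemma dotp_zero_left (x : ℕ+ →₀ ℝ) : dotp 0 x = 0 := by simp [dotp]

lemma dotp_zero_right (f : ℕ+ →₀ ℝ) : dotp f 0 = 0 := by simp [dotp]

lemma dotp_add_left (f g x : ℕ+ →₀ ℝ) : dotp (f + g) x = dotp f x + dotp g x := by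
  rw [dotp_eq_sum (f + g) x (f.support ∪ g.support)
      (Finset.inter_subset_left.trans (Finsupp.support_add)),
    dotp_eq_sum f x (f.support ∪ g.support)
      (Finset.inter_subset_left.trans Finset.subset_union_left),
    dotp_eq_sum g x (f.support ∪ g.support)
      (Finset.inter_subset_left.trans Finset.subset_union_right),
    ← Finset.sum_add_distrib]
  exact Finset.sum_congr rfl fun n _ => by rw [Finsupp.add_apply, add_mul]

lemma dotp_smul_left (c : ℝ) (f x : ℕ+ →₀ ℝ) : dotp (c • f) x = c * dotp f x := by
  rw [dotp_eq_sum (c • f) x f.support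
      (Finset.inter_subset_left.trans (Finsupp.support_smul)), dotp, Finset.mul_sum]
  exact Finset.sum_congr rfl fun n _ => by rw [Finsupp.smul_apply, smul_eq_mul, mul_assoc]

lemma dotp_neg_left (f x : ℕ+ →₀ ℝ) : dotp (-f) x = -dotp f x := by
  have := dotp_smul_left (-1) f x
  simpa using this

lemma dotp_sum_left (x : ℕ+ →₀ ℝ) {ι : Type*} (s : Finset ι) (g : ι → (ℕ+ →₀ ℝ)) :
    dotp (∑ i ∈ s, g i) x = ∑ i ∈ s, dotp (g i) x := by
  classical
  induction s using Finset.induction_on with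
  | empty => simp [dotp_zero_left]
  | insert _ _ hni ih => rename_i a s'
                         rw [Finset.sum_insert hni, Finset.sum_insert hni, dotp_add_left, ih]

lemma dotp_single_left (n : ℕ+) (c : ℝ) (x : ℕ+ →₀ ℝ) :
    dotp (Finsupp.single n c) x = c * x n := by
  rw [dotp_eq_sum _ x {n} (Finset.inter_subset_left.trans Finsupp.support_single_subset)]
  simp

lemma dotp_add_right (f x y : ℕ+ →₀ ℝ) : dotp f (x + y) = dotp f x + dotp f y := by
  unfold dotp
  rw [← Finset.sum_add_distrib]
  exact Finset.sum_congr rfl fun n _ => by rw [Finsupp.add_apply, mul_add]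

lemma dotp_smul_right (c : ℝ) (f x : ℕ+ →₀ ℝ) : dotp f (c • x) = c * dotp f x := by
  unfold dotp
  rw [Finset.mul_sum]
  exact Finset.sum_congr rfl fun n _ => by rw [Finsupp.smul_apply, smul_eq_mul]; ring

lemma dotp_sub_right (f x y : ℕ+ →₀ ℝ) : dotp f (x - y) = dotp f x - dotp f y := by
  have h := dotp_add_right f y (x - y)
  rw [add_sub_cancel] at h
  linarith

lemma restr_support (E : Set ℕ+) (f : ℕ+ →₀ ℝ) :
    (restr E f).support = f.support.filter (· ∈ E) := rfl

lemma restr_apply (E : Set ℕ+) (f : ℕ+ →₀ ℝ) (n : ℕ+) :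
    restr E f n = if n ∈ E then f n else 0 := rfl

lemma dotp_neg_right (f x : ℕ+ →₀ ℝ) : dotp f (-x) = -dotp f x := by
  have := dotp_smul_right (-1) f x
  simpa using this

lemma dotp_single_right (f : ℕ+ →₀ ℝ) (n : ℕ+) (c : ℝ) :
    dotp f (Finsupp.single n c) = f n * c := by
  rw [dotp_eq_sum f _ {n} (Finset.inter_subset_right.trans Finsupp.support_single_subset)]
  simp

section NW
variable {W : Set (ℕ+ →₀ ℝ)}

def WSet (W : Set (ℕ+ →₀ ℝ)) (x : ℕ+ →₀ ℝ) : Set ℝ := {r : ℝ | ∃ f ∈ W, r = dotp f x}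

lemma normW_eq (x : ℕ+ →₀ ℝ) : normW W x = sSup (WSet W x) := rfl

variable (hb : ∀ f ∈ W, ∀ n : ℕ+, |f n| ≤ 1)
  (hne : (Finsupp.single 1 (1:ℝ)) ∈ W) (hneg : ∀ f ∈ W, -f ∈ W)

include hb in
lemma dotp_le_l1 (f : ℕ+ →₀ ℝ) (hf : f ∈ W) (x : ℕ+ →₀ ℝ) :
    dotp f x ≤ ∑ n ∈ x.support, |x n| := by
  rw [dotp_eq_sum f x x.support Finset.inter_subset_right]
  refine Finset.sum_le_sum fun n _ => ?_
  calc f n * x n ≤ |f n * x n| := le_abs_self _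
    _ = |f n| * |x n| := abs_mul _ _
    _ ≤ 1 * |x n| := by
        exact mul_le_mul_of_nonneg_right (hb f hf n) (abs_nonneg _)
    _ = |x n| := one_mul _

include hb in
lemma WSet_bddAbove (x : ℕ+ →₀ ℝ) : BddAbove (WSet W x) := by
  refine ⟨∑ n ∈ x.support, |x n|, fun r hr => ?_⟩
  obtain ⟨f, hf, rfl⟩ := hr
  exact dotp_le_l1 hb f hf x

include hne in
lemma WSet_nonempty (x : ℕ+ →₀ ℝ) : (WSet W x).Nonempty := ⟨_, _, hne, rfl⟩

include hb in
lemma dotp_le_normW (f : ℕ+ →₀ ℝ) (hf : f ∈ W) (x : ℕ+ →₀ ℝ) :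
    dotp f x ≤ normW W x := le_csSup (WSet_bddAbove hb x) ⟨f, hf, rfl⟩

include hb hne hneg in
lemma normW_nonneg (x : ℕ+ →₀ ℝ) : 0 ≤ normW W x := by
  have h1 := dotp_le_normW hb _ hne x
  have h2 := dotp_le_normW hb _ (hneg _ hne) x
  rw [dotp_neg_left] at h2
  linarith

include hne in
lemma normW_le (x : ℕ+ →₀ ℝ) (a : ℝ) (h : ∀ f ∈ W, dotp f x ≤ a) :
    normW W x ≤ a := csSup_le (WSet_nonempty hne x) (fun r ⟨f, hf, hr⟩ => hr ▸ h f hf)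

include hb hne in
lemma normW_add (x y : ℕ+ →₀ ℝ) : normW W (x + y) ≤ normW W x + normW W y := by
  refine normW_le hne _ _ fun f hf => ?_
  rw [dotp_add_right]
  exact add_le_add (dotp_le_normW hb f hf x) (dotp_le_normW hb f hf y)

include hb hne in
lemma normW_smul (c : ℝ) (hc : 0 ≤ c) (x : ℕ+ →₀ ℝ) :
    normW W (c • x) = c * normW W x := by
  have key : ∀ d : ℝ, 0 ≤ d → ∀ z : ℕ+ →₀ ℝ, normW W (d • z) ≤ d * normW W z := by
    intro d hd z
    refine normW_le hne _ _ fun f hf => ?_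
    rw [dotp_smul_right]
    exact mul_le_mul_of_nonneg_left (dotp_le_normW hb f hf z) hd
  rcases eq_or_lt_of_le hc with rfl | hc'
  · have : (0:ℝ) • x = (0 : ℕ+ →₀ ℝ) := zero_smul _ _
    rw [this, zero_mul]
    refine le_antisymm (normW_le hne _ _ fun f hf => ?_) ?_
    · simp [dotp]
    · refine le_csSup (WSet_bddAbove hb 0) ⟨_, hne, ?_⟩
      simp [dotp]
  · refine le_antisymm (key c hc x) ?_
    have h2 := key c⁻¹ (by positivity) (c • x)
    rw [inv_smul_smul₀ (ne_of_gt hc')] at h2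
    calc c * normW W x ≤ c * (c⁻¹ * normW W (c • x)) :=
          mul_le_mul_of_nonneg_left h2 hc
      _ = normW W (c • x) := by field_simp

include hneg in
lemma normW_neg (x : ℕ+ →₀ ℝ) : normW W (-x) = normW W x := by
  have hset : WSet W (-x) = WSet W x := by
    ext r
    constructor
    · rintro ⟨f, hf, rfl⟩
      exact ⟨-f, hneg f hf, by rw [dotp_neg_left, dotp_neg_right]⟩
    · rintro ⟨f, hf, rfl⟩
      exact ⟨-f, hneg f hf, by rw [dotp_neg_left, dotp_neg_right, neg_neg]⟩
  rw [normW_eq, normW_eq, hset]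

include hb hne in
lemma normW_single_le_one (n : ℕ+) : normW W (Finsupp.single n (1:ℝ)) ≤ 1 := by
  refine normW_le hne _ _ fun f hf => ?_
  rw [dotp_single_right]
  simp only [mul_one]
  exact (le_abs_self _).trans (hb f hf n)

end NW

section Q
variable {W : Set (ℕ+ →₀ ℝ)}

def Pev (y : ℕ+ →₀ ℝ) : Prop := ∀ n ∈ y.support, ∃ m : ℕ+, n = 2 * m

noncomputable def qnorm (W : Set (ℕ+ →₀ ℝ)) (z : ℕ+ →₀ ℝ) : ℝ :=
  sInf {r : ℝ | ∃ y : ℕ+ →₀ ℝ,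
    (∀ n ∈ y.support, ∃ m : ℕ+, n = 2 * m) ∧ r = normW W (z - y)}

def qSet (W : Set (ℕ+ →₀ ℝ)) (z : ℕ+ →₀ ℝ) : Set ℝ :=
  {r : ℝ | ∃ y : ℕ+ →₀ ℝ, Pev y ∧ r = normW W (z - y)}

lemma qnorm_eq (z : ℕ+ →₀ ℝ) : qnorm W z = sInf (qSet W z) := rfl

lemma Pev_zero : Pev (0 : ℕ+ →₀ ℝ) := by intro n hn; simp at hn

lemma Pev_smul (c : ℝ) (y : ℕ+ →₀ ℝ) (h : Pev y) : Pev (c • y) := by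
  intro n hn
  exact h n (Finsupp.support_smul hn)

lemma qSet_nonempty (z : ℕ+ →₀ ℝ) : (qSet W z).Nonempty :=
  ⟨normW W (z - 0), 0, Pev_zero, rfl⟩

variable (hb : ∀ f ∈ W, ∀ n : ℕ+, |f n| ≤ 1)
  (hne : (Finsupp.single 1 (1:ℝ)) ∈ W) (hneg : ∀ f ∈ W, -f ∈ W)

include hb hne hneg

lemma qSet_bddBelow (z : ℕ+ →₀ ℝ) : BddBelow (qSet W z) := by
  refine ⟨0, fun r hr => ?_⟩
  obtain ⟨y, _, rfl⟩ := hr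
  exact normW_nonneg hb hne hneg _

lemma qnorm_nonneg (z : ℕ+ →₀ ℝ) : 0 ≤ qnorm W z :=
  le_csInf (qSet_nonempty z) (fun r ⟨y, _, hr⟩ => hr ▸ normW_nonneg hb hne hneg _)

lemma qnorm_le (z y : ℕ+ →₀ ℝ) (hy : Pev y) : qnorm W z ≤ normW W (z - y) :=
  csInf_le (qSet_bddBelow hb hne hneg z) ⟨y, hy, rfl⟩

lemma qnorm_le_normW (z : ℕ+ →₀ ℝ) : qnorm W z ≤ normW W z := by
  have := qnorm_le hb hne hneg z 0 Pev_zero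
  rwa [sub_zero] at this

lemma qnorm_add (z₁ z₂ : ℕ+ →₀ ℝ) : qnorm W (z₁ + z₂) ≤ qnorm W z₁ + qnorm W z₂ := by
  rw [qnorm_eq, qnorm_eq, qnorm_eq]
  have h : ∀ a ∈ qSet W z₁, sInf (qSet W (z₁ + z₂)) - a ≤ sInf (qSet W z₂) := by
    rintro a ⟨y₁, hy₁, rfl⟩
    refine le_csInf (qSet_nonempty z₂) ?_
    rintro b ⟨y₂, hy₂, rfl⟩
    rw [sub_le_iff_le_add]
    have hmem : normW W ((z₁ + z₂) - (y₁ + y₂)) ∈ qSet W (z₁ + z₂) := by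
      refine ⟨y₁ + y₂, ?_, rfl⟩
      intro n hn
      rcases Finset.mem_union.mp (Finsupp.support_add hn) with h | h
      · exact hy₁ n h
      · exact hy₂ n h
    refine (csInf_le (qSet_bddBelow hb hne hneg _) hmem).trans ?_
    have : (z₁ + z₂) - (y₁ + y₂) = (z₁ - y₁) + (z₂ - y₂) := by abel
    rw [this]
    have := normW_add hb hne (z₁ - y₁) (z₂ - y₂)
    linarith
  have h2 : ∀ a ∈ qSet W z₁, sInf (qSet W (z₁ + z₂)) - sInf (qSet W z₂) ≤ a := by
    intro a ha
    have := h a ha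
    linarith
  have := le_csInf (qSet_nonempty z₁) h2
  linarith

lemma qnorm_smul_pos (c : ℝ) (hc : 0 < c) (z : ℕ+ →₀ ℝ) :
    qnorm W (c • z) = c * qnorm W z := by
  rw [qnorm_eq, qnorm_eq]
  have hset : qSet W (c • z) = c • (qSet W z) := by
    ext r
    constructor
    · rintro ⟨y, hy, rfl⟩
      refine ⟨normW W (z - c⁻¹ • y), ⟨c⁻¹ • y, Pev_smul _ _ hy, rfl⟩, ?_⟩
      have : c • (z - c⁻¹ • y) = c • z - y := by
        rw [smul_sub, smul_inv_smul₀ (ne_of_gt hc)]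
      show c • _ = _
      rw [smul_eq_mul, ← normW_smul hb hne c hc.le, this]
    · rintro ⟨b, ⟨y, hy, rfl⟩, rfl⟩
      refine ⟨c • y, Pev_smul _ _ hy, ?_⟩
      show c • _ = _
      rw [smul_eq_mul, ← normW_smul hb hne c hc.le, smul_sub]
  rw [hset, Real.sInf_smul_of_nonneg hc.le, smul_eq_mul]

lemma exists_functional (x : ℕ+ →₀ ℝ) (hx0 : x ≠ 0) :
    ∃ F : (ℕ+ →₀ ℝ) →ₗ[ℝ] ℝ, F x = qnorm W x ∧
      (∀ z, |F z| ≤ normW W z) ∧ (∀ y, Pev y → F y = 0) := by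
  set d₀ := qnorm W x with hd₀
  have hdom : ∀ z : (LinearPMap.mkSpanSingleton (K := ℝ) (L := ℝ) (σ := RingHom.id ℝ) x d₀ hx0).domain,
      (LinearPMap.mkSpanSingleton (K := ℝ) (L := ℝ) (σ := RingHom.id ℝ) x d₀ hx0) z ≤ qnorm W z := by
    rintro ⟨z, hz⟩
    obtain ⟨c, rfl⟩ := Submodule.mem_span_singleton.mp hz
    have happ : (LinearPMap.mkSpanSingleton (L := ℝ) (σ := RingHom.id ℝ) x d₀ hx0) ⟨c • x, hz⟩ = c • d₀ :=
      LinearPMap.mkSpanSingleton'_apply _ _ _ c _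
    rw [happ, smul_eq_mul]
    rcases lt_trichotomy c 0 with hlt | rfl | hgt
    · have : c * d₀ ≤ 0 := mul_nonpos_of_nonpos_of_nonneg hlt.le (qnorm_nonneg hb hne hneg x)
      exact this.trans (qnorm_nonneg hb hne hneg _)
    · simp only [zero_mul, zero_smul]
      exact qnorm_nonneg hb hne hneg _
    · rw [qnorm_smul_pos hb hne hneg c hgt]
  obtain ⟨F, hFeq, hFle⟩ := exists_extension_of_le_sublinear
    (LinearPMap.mkSpanSingleton x d₀ hx0) (qnorm W)
    (fun c hc z => qnorm_smul_pos hb hne hneg c hc z) (qnorm_add hb hne hneg) hdom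
  refine ⟨F, ?_, ?_, ?_⟩
  · have hmem : x ∈ Submodule.span ℝ ({x} : Set (ℕ+ →₀ ℝ)) :=
      Submodule.mem_span_singleton_self x
    have := hFeq ⟨x, hmem⟩
    rw [LinearPMap.mkSpanSingleton_apply] at this
    exact this
  · intro z
    rw [abs_le]
    constructor
    · have h1 := hFle (-z)
      have h2 := (qnorm_le_normW hb hne hneg (-z)).trans (le_of_eq (normW_neg hneg z))
      rw [map_neg] at h1
      linarith
    · exact (hFle z).trans (qnorm_le_normW hb hne hneg z)
  · intro y hy
    have h1 : F y ≤ 0 := by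
      have := (hFle y).trans (qnorm_le hb hne hneg y y hy)
      rwa [sub_self, (by
        refine le_antisymm ?_ (normW_nonneg hb hne hneg 0)
        have : (0 : ℕ+ →₀ ℝ) = (0:ℝ) • (0 : ℕ+ →₀ ℝ) := by simp
        rw [this, normW_smul hb hne 0 le_rfl, zero_mul] : normW W (0 : ℕ+ →₀ ℝ) = 0)] at this
    have h2 : F (-y) ≤ 0 := by
      have hy' : Pev (-y) := by
        have := Pev_smul (-1) y hy
        simpa using this
      have := (hFle (-y)).trans (qnorm_le hb hne hneg (-y) (-y) hy')
      rwa [sub_self, (by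
        refine le_antisymm ?_ (normW_nonneg hb hne hneg 0)
        have : (0 : ℕ+ →₀ ℝ) = (0:ℝ) • (0 : ℕ+ →₀ ℝ) := by simp
        rw [this, normW_smul hb hne 0 le_rfl, zero_mul] : normW W (0 : ℕ+ →₀ ℝ) = 0)] at this
    rw [map_neg] at h2
    linarith

end Q

lemma arith_key (ε δr η C Nr Sr A T Fx : ℝ) (hε : 0 < ε) (hδ : 0 < δr)
    (hC : 0 ≤ C) (hSr0 : 0 ≤ Sr) (hSr : Sr ≤ η * Nr)
    (hexp : η * (1 + C + ε * Nr) = Fx - ε) (h1 : Fx - η ≤ A) (h2 : T ≤ η * C) :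
    (ε - δr) * (1 + Sr) < A - T := by
  nlinarith [mul_nonneg hδ.le hSr0, mul_le_mul_of_nonneg_left hSr hε.le]


theorem statement8 (W : Set (ℕ+ →₀ ℝ))
    -- (i) `±e_n^* ∈ W` for all `n`
    (h1 : ∀ n : ℕ+, Finsupp.single n (1 : ℝ) ∈ W ∧ -Finsupp.single n (1 : ℝ) ∈ W)
    -- (ii) every `f ∈ W` is rational-valued with `|f(n)| ≤ 1` for all `n`
    (h2 : ∀ f ∈ W, (∀ n : ℕ+, ∃ q : ℚ, f n = (q : ℝ)) ∧ (∀ n : ℕ+, |f n| ≤ 1))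
    -- (iii) `W` is symmetric and closed under restrictions to intervals
    (h3a : ∀ f ∈ W, -f ∈ W)
    (h3b : ∀ f ∈ W, ∀ E : Set ℕ+, E.OrdConnected → restr E f ∈ W)
    -- (iv) `W` is closed under rational convex combinations
    (h4 : ∀ (d : ℕ) (g : Fin d → (ℕ+ →₀ ℝ)) (r : Fin d → ℚ),
      (∀ i, g i ∈ W) → (∀ i, 0 ≤ r i) → (∑ i, r i) = 1 →
      (∑ i, (r i : ℝ) • g i) ∈ W)
    -- (v) every linear functional dominated by `‖·‖_W` is approximable by elements of `W`
    (h5 : ∀ F : (ℕ+ →₀ ℝ) →ₗ[ℝ] ℝ, (∀ y : ℕ+ →₀ ℝ, |F y| ≤ normW W y) →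
      ∀ η : ℝ, 0 < η → ∃ g ∈ W, ∀ y : ℕ+ →₀ ℝ, |F y - dotp g y| ≤ η * normW W y)
    (ε : ℝ) (hε : 0 < ε) (x : ℕ+ →₀ ℝ) (hx : normW W x = 1)
    -- `inf {‖x - y‖_W : supp y ⊆ evens} > ε`
    (hdist : ε < sInf {r : ℝ | ∃ y : ℕ+ →₀ ℝ,
      (∀ n ∈ y.support, ∃ m : ℕ+, n = 2 * m) ∧ r = normW W (x - y)})
    (δ : ℚ) (hδ0 : 0 < δ) (hδε : (δ : ℝ) < ε) :
    ∃ f ∈ W, (∀ n : ℕ+, f (2 * n) = 0) ∧ ε - (δ : ℝ) < dotp f x := by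
  have hb : ∀ f ∈ W, ∀ n : ℕ+, |f n| ≤ 1 := fun f hf => (h2 f hf).2
  have hne : (Finsupp.single 1 (1:ℝ)) ∈ W := (h1 1).1
  -- x ≠ 0
  have hx0 : x ≠ 0 := by
    intro h
    have h0 : normW W (0 : ℕ+ →₀ ℝ) = 0 := by
      have := normW_smul hb hne 0 le_rfl 0
      simpa using this
    rw [h, h0] at hx
    norm_num at hx
  obtain ⟨F, hFx, hFnorm, hFev⟩ := exists_functional hb hne h3a x hx0
  have hd : ε < F x := by rw [hFx]; exact hdist
  -- support bound
  have hsupp : x.support.Nonempty := by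
    rcases Finset.eq_empty_or_nonempty x.support with h | h
    · exact absurd (Finsupp.support_eq_empty.mp h) hx0
    · exact h
  set N : ℕ+ := x.support.max' hsupp with hN
  have hsuppN : ∀ n ∈ x.support, n ≤ N := fun n hn => Finset.le_max' _ n hn
  -- even part of x
  set xe : ℕ+ →₀ ℝ := restr {a : ℕ+ | ∃ m : ℕ+, a = 2 * m} x with hxe
  have hxe_supp : ∀ n ∈ xe.support, ∃ m : ℕ+, n = 2 * m := by
    intro n hn
    rw [hxe, restr_support, Finset.mem_filter] at hn
    exact hn.2
  have hxe_suppx : ∀ n ∈ xe.support, n ∈ x.support := by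
    intro n hn
    rw [hxe, restr_support, Finset.mem_filter] at hn
    exact hn.1
  have hFxe : F xe = 0 := hFev xe hxe_supp
  set C : ℝ := normW W xe with hCdef
  have hC0 : 0 ≤ C := normW_nonneg hb hne h3a xe
  set Nr : ℝ := ((N : ℕ) : ℝ) with hNr
  have hNr0 : 0 ≤ Nr := by positivity
  set B : ℝ := 1 + C + ε * Nr with hB
  have hB0 : 0 < B := by positivity
  set η : ℝ := (F x - ε) / B with hη
  have hη0 : 0 < η := div_pos (by linarith) hB0
  obtain ⟨g, hgW, hgapp⟩ := h5 F hFnorm η hη0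
  -- restrict g to [1, N]
  set g₁ : ℕ+ →₀ ℝ := restr (Set.Iic N) g with hg₁def
  have hg₁W : g₁ ∈ W := h3b g hgW _ Set.ordConnected_Iic
  have hg₁supp : ∀ n ∈ g₁.support, n ∈ g.support ∧ n ≤ N := by
    intro n hn
    rw [Finsupp.mem_support_iff, hg₁def, restr_apply] at hn
    by_cases hle : n ∈ Set.Iic N
    · rw [if_pos hle] at hn
      exact ⟨Finsupp.mem_support_iff.mpr hn, hle⟩
    · rw [if_neg hle] at hn
      exact absurd rfl hn
  have hg₁eq : ∀ n : ℕ+, n ≤ N → g₁ n = g n := by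
    intro n hn
    rw [hg₁def, restr_apply, if_pos (show n ∈ Set.Iic N from hn)]
  choose q hq using (h2 g₁ hg₁W).1
  set Ev : Finset ℕ+ := g₁.support.filter (fun n => ∃ m : ℕ+, n = 2 * m) with hEv
  set k : ℕ := Ev.card with hk
  set S : ℚ := ∑ n ∈ Ev, |q n| with hS
  have hS0 : (0:ℚ) ≤ S := Finset.sum_nonneg fun n _ => abs_nonneg _
  have h1S : (0:ℚ) < 1 + S := by linarith
  have h1Sr : (0:ℝ) < 1 + (S:ℝ) := by exact_mod_cast h1S
  -- each even coefficient of g is small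
  have hsmall : ∀ n ∈ Ev, |g₁ n| ≤ η := by
    intro n hn
    rw [hEv, Finset.mem_filter] at hn
    obtain ⟨hns, m, hm⟩ := hn
    have hPev : Pev (Finsupp.single n (1:ℝ)) := by
      intro a ha
      have := Finsupp.support_single_subset ha
      rw [Finset.mem_singleton] at this
      exact ⟨m, this ▸ hm⟩
    have hF0 : F (Finsupp.single n (1:ℝ)) = 0 := hFev _ hPev
    have happ := hgapp (Finsupp.single n (1:ℝ))
    rw [hF0, dotp_single_right g n 1, mul_one, zero_sub, abs_neg] at happ
    have hle : η * normW W (Finsupp.single n (1:ℝ)) ≤ η := by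
      have := normW_single_le_one hb hne n
      nlinarith
    have hle2 : |g n| ≤ η := happ.trans hle
    rw [hg₁eq n (hg₁supp n hns).2]
    exact hle2
  -- |S| ≤ η * k ≤ η * N
  have hkN : (k : ℝ) ≤ Nr := by
    have hcard : Ev.card ≤ (N:ℕ) := by
      have hsub : ∀ n ∈ Ev, (n:ℕ) ∈ Finset.Icc 1 (N:ℕ) := by
        intro n hn
        rw [hEv, Finset.mem_filter] at hn
        have := (hg₁supp n hn.1).2
        rw [Finset.mem_Icc]
        exact ⟨n.one_le, by exact_mod_cast this⟩
      have hinj : Set.InjOn (fun n : ℕ+ => (n:ℕ)) Ev := fun a _ b _ h => by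
        exact_mod_cast PNat.coe_injective h
      have := Finset.card_le_card_of_injOn _ hsub hinj
      simpa [Nat.card_Icc] using this
    rw [hNr]
    exact_mod_cast hcard
  have hSr : (S:ℝ) ≤ η * Nr := by
    have h1 : (S:ℝ) = ∑ n ∈ Ev, |g₁ n| := by
      rw [hS]
      push_cast
      exact Finset.sum_congr rfl fun n _ => by rw [← hq n]
    have h2' : ∑ n ∈ Ev, |g₁ n| ≤ k * η := by
      have := Finset.sum_le_card_nsmul Ev (fun n => |g₁ n|) η hsmall
      simpa [nsmul_eq_mul, hk] using this
    have : (k:ℝ) * η ≤ η * Nr := by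
      rw [mul_comm]
      exact mul_le_mul_of_nonneg_left hkN hη0.le
    linarith [h1 ▸ h2']
  -- the sign elements
  set sg : ℕ+ → (ℕ+ →₀ ℝ) := fun n =>
    if 0 ≤ g₁ n then -Finsupp.single n 1 else Finsupp.single n 1 with hsg
  have hsg1 : ∀ n : ℕ+, 0 ≤ g₁ n → sg n = -Finsupp.single n 1 := by
    intro n h; rw [hsg]; simp only [h, if_true]
  have hsg2 : ∀ n : ℕ+, ¬(0 ≤ g₁ n) → sg n = Finsupp.single n 1 := by
    intro n h; rw [hsg]; simp only [h, if_false]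
  have hsgW : ∀ n, sg n ∈ W := by
    intro n
    by_cases h : 0 ≤ g₁ n
    · rw [hsg1 n h]; exact (h1 n).2
    · rw [hsg2 n h]; exact (h1 n).1
  -- the convex combination
  set e := Ev.equivFin with he
  set gg : Fin (k+1) → (ℕ+ →₀ ℝ) := Fin.cons g₁ (fun i => sg ((e.symm i) : ℕ+)) with hgg
  set rr : Fin (k+1) → ℚ := Fin.cons (1/(1+S)) (fun i => |q ((e.symm i) : ℕ+)| / (1+S))
    with hrr
  have hrr0 : ∀ i, 0 ≤ rr i := by
    intro i
    refine Fin.cases ?_ ?_ i <;> intros <;>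
      simp [hrr, Fin.cons_zero, Fin.cons_succ] <;> positivity
  have hrrsum : (∑ i, rr i) = 1 := by
    rw [hrr, Fin.sum_cons]
    have : ∑ i : Fin k, |q ((e.symm i) : ℕ+)| / (1+S) = ∑ n ∈ Ev, |q n| / (1+S) := by
      rw [← Finset.sum_coe_sort Ev (fun n => |q n| / (1+S))]
      exact Equiv.sum_comp e.symm (fun a : Ev => |q (a : ℕ+)| / (1+S))
    rw [this, ← Finset.sum_div, ← hS]
    field_simp
  set f : ℕ+ →₀ ℝ := ∑ i, (rr i : ℝ) • gg i with hf
  have hfW : f ∈ W := h4 (k+1) gg rr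
    (by intro i; refine Fin.cases ?_ ?_ i
        · rw [hgg, Fin.cons_zero]; exact hg₁W
        · intro j; rw [hgg, Fin.cons_succ]; exact hsgW _)
    hrr0 hrrsum
  have hEvmem : ∀ n : ℕ+, n ∈ Ev ↔ (g₁ n ≠ 0 ∧ ∃ m : ℕ+, n = 2 * m) := by
    intro n
    rw [hEv, Finset.mem_filter, Finsupp.mem_support_iff]
  have hsgapp : ∀ b a : ℕ+, b ≠ a → sg b a = 0 := by
    intro b a hba
    by_cases h : 0 ≤ g₁ b
    · rw [hsg1 b h]
      simp [Finsupp.single_apply, hba]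
    · rw [hsg2 b h]
      simp [Finsupp.single_apply, hba]
  have hqabs : ∀ n : ℕ+, ((|q n| : ℚ) : ℝ) = |g₁ n| := by
    intro n
    push_cast
    rw [← hq n]
  -- value of f at a point
  have hfapp : ∀ a : ℕ+, f a = ((1/(1+S) : ℚ):ℝ) * g₁ a +
      ∑ n ∈ Ev, ((|q n|/(1+S) : ℚ):ℝ) * sg n a := by
    intro a
    rw [hf, Finsupp.finset_sum_apply]
    simp only [Finsupp.smul_apply, smul_eq_mul]
    rw [Fin.sum_univ_succ]
    congr 1
    have h₁ : ∀ i : Fin k, rr i.succ = |q ((e.symm i) : ℕ+)| / (1+S) := fun i => by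
      rw [hrr, Fin.cons_succ]
    have h₂ : ∀ i : Fin k, gg i.succ = sg ((e.symm i) : ℕ+) := fun i => by
      rw [hgg, Fin.cons_succ]
    calc ∑ i : Fin k, (rr i.succ : ℝ) * (gg i.succ) a
        = ∑ i : Fin k, ((|q ((e.symm i) : ℕ+)| / (1+S) : ℚ):ℝ) * (sg ((e.symm i) : ℕ+)) a :=
          Finset.sum_congr rfl fun i _ => by rw [h₁ i, h₂ i]
      _ = ∑ n ∈ Ev, ((|q n|/(1+S) : ℚ):ℝ) * sg n a := by
          rw [← Finset.sum_coe_sort Ev (fun n => ((|q n|/(1+S) : ℚ):ℝ) * sg n a)]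
          exact Equiv.sum_comp e.symm (fun b : Ev => ((|q (b : ℕ+)|/(1+S) : ℚ):ℝ) * sg (b : ℕ+) a)
  -- f vanishes on even coordinates
  have hfeven : ∀ m : ℕ+, f (2 * m) = 0 := by
    intro m
    rw [hfapp]
    set a : ℕ+ := 2 * m with ha
    by_cases haEv : a ∈ Ev
    · rw [Finset.sum_eq_single_of_mem a haEv
        (fun b _ hba => by rw [hsgapp b a hba, mul_zero])]
      push_cast
      by_cases hpos : 0 ≤ g₁ a
      · have h1 : sg a a = -1 := by
          rw [hsg1 a hpos]
          simp [Finsupp.single_apply]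
        have h2 : ((|q a| : ℚ) : ℝ) = g₁ a := by
          rw [hqabs a, abs_of_nonneg hpos]
        rw [h1]
        push_cast at h2
        rw [h2]
        ring
      · have h1 : sg a a = 1 := by
          rw [hsg2 a hpos]
          simp [Finsupp.single_apply]
        have h2 : ((|q a| : ℚ) : ℝ) = -g₁ a := by
          rw [hqabs a, abs_of_neg (lt_of_not_ge hpos)]
        rw [h1]
        push_cast at h2
        rw [h2]
        ring
    · have hg0 : g₁ a = 0 := by
        by_contra h
        exact haEv ((hEvmem a).mpr ⟨h, m, ha⟩)
      rw [hg0, mul_zero, zero_add]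
      refine Finset.sum_eq_zero fun b hb => ?_
      have hba : b ≠ a := fun h => haEv (h ▸ hb)
      rw [hsgapp b a hba, mul_zero]
  -- value of dotp f x
  have hdotp : dotp f x = (dotp g₁ x - ∑ n ∈ Ev, g₁ n * x n) / (1 + (S:ℝ)) := by
    rw [hf, dotp_sum_left]
    simp only [dotp_smul_left]
    rw [Fin.sum_univ_succ]
    have h₁ : ∀ i : Fin k, rr i.succ = |q ((e.symm i) : ℕ+)| / (1+S) := fun i => by
      rw [hrr, Fin.cons_succ]
    have h₂ : ∀ i : Fin k, gg i.succ = sg ((e.symm i) : ℕ+) := fun i => by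
      rw [hgg, Fin.cons_succ]
    have hsum2 : ∑ i : Fin k, (rr i.succ : ℝ) * dotp (gg i.succ) x
        = ∑ n ∈ Ev, ((|q n|/(1+S) : ℚ):ℝ) * dotp (sg n) x := by
      calc ∑ i : Fin k, (rr i.succ : ℝ) * dotp (gg i.succ) x
          = ∑ i : Fin k, ((|q ((e.symm i) : ℕ+)| / (1+S) : ℚ):ℝ) * dotp (sg ((e.symm i) : ℕ+)) x :=
            Finset.sum_congr rfl fun i _ => by rw [h₁ i, h₂ i]
        _ = ∑ n ∈ Ev, ((|q n|/(1+S) : ℚ):ℝ) * dotp (sg n) x := by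
            rw [← Finset.sum_coe_sort Ev (fun n => ((|q n|/(1+S) : ℚ):ℝ) * dotp (sg n) x)]
            exact Equiv.sum_comp e.symm (fun b : Ev => ((|q (b : ℕ+)|/(1+S) : ℚ):ℝ) * dotp (sg (b : ℕ+)) x)
    rw [hsum2]
    have hterm : ∀ n ∈ Ev, ((|q n|/(1+S) : ℚ):ℝ) * dotp (sg n) x
        = (-(g₁ n * x n)) / (1 + (S:ℝ)) := by
      intro n _
      by_cases hpos : 0 ≤ g₁ n
      · rw [hsg1 n hpos, dotp_neg_left, dotp_single_left]
        have h2 : ((|q n| : ℚ) : ℝ) = g₁ n := by rw [hqabs n, abs_of_nonneg hpos]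
        push_cast
        push_cast at h2
        rw [h2]
        ring
      · rw [hsg2 n hpos, dotp_single_left]
        have h2 : ((|q n| : ℚ) : ℝ) = -g₁ n := by
          rw [hqabs n, abs_of_neg (lt_of_not_ge hpos)]
        push_cast
        push_cast at h2
        rw [h2]
        ring
    rw [Finset.sum_congr rfl hterm]
    have hrr0' : ((1/(1+S) : ℚ):ℝ) * dotp (gg 0) x = dotp g₁ x / (1 + (S:ℝ)) := by
      rw [hgg]
      simp only [Fin.cons_zero]
      push_cast
      ring
    have : (rr 0 : ℝ) = ((1/(1+S) : ℚ):ℝ) := by rw [hrr]; simp [Fin.cons_zero]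
    rw [this, hrr0', ← Finset.sum_div]
    have hne' : (1:ℝ) + (S:ℝ) ≠ 0 := ne_of_gt h1Sr
    field_simp
    rw [Finset.sum_neg_distrib]
    ring
  -- identification of the two dot products
  have hAeq : dotp g₁ x = dotp g x := by
    rw [dotp_eq_sum g₁ x x.support Finset.inter_subset_right,
      dotp_eq_sum g x x.support Finset.inter_subset_right]
    exact Finset.sum_congr rfl fun n hn => by rw [hg₁eq n (hsuppN n hn)]
  have hTeq : ∑ n ∈ Ev, g₁ n * x n = dotp g xe := by
    have hsub : g.support ∩ xe.support ⊆ Ev := by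
      intro n hn
      rw [Finset.mem_inter] at hn
      obtain ⟨hg', hxe'⟩ := hn
      have hle := hsuppN n (hxe_suppx n hxe')
      refine (hEvmem n).mpr ⟨?_, hxe_supp n hxe'⟩
      rw [hg₁eq n hle]
      exact Finsupp.mem_support_iff.mp hg'
    rw [dotp_eq_sum g xe Ev hsub]
    refine Finset.sum_congr rfl fun n hn => ?_
    obtain ⟨hg0, m, hm⟩ := (hEvmem n).mp hn
    have hle : n ≤ N := (hg₁supp n (Finsupp.mem_support_iff.mpr hg0)).2
    rw [hg₁eq n hle]
    congr 1
    rw [hxe, restr_apply,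
      if_pos (show n ∈ {a : ℕ+ | ∃ m : ℕ+, a = 2 * m} from ⟨m, hm⟩)]
  -- estimates
  have hest1 : |F x - dotp g x| ≤ η := by
    have := hgapp x
    rwa [hx, mul_one] at this
  have hest2 : |dotp g xe| ≤ η * C := by
    have := hgapp xe
    rwa [hFxe, zero_sub, abs_neg, ← hCdef] at this
  have hexp : η * (1 + C + ε * Nr) = F x - ε := by
    rw [hη, ← hB]
    field_simp
  have hkey : (ε - (δ:ℝ)) * (1 + (S:ℝ)) < dotp g x - dotp g xe := by
    have h1' : F x - η ≤ dotp g x := by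
      have := (abs_le.mp hest1).2
      linarith
    have h2' : dotp g xe ≤ η * C := (le_abs_self _).trans hest2
    have hδr : (0:ℝ) < (δ:ℝ) := by exact_mod_cast hδ0
    have hSr0 : (0:ℝ) ≤ (S:ℝ) := by exact_mod_cast hS0
    exact arith_key ε (δ:ℝ) η C Nr (S:ℝ) (dotp g x) (dotp g xe) (F x)
      hε hδr hC0 hSr0 hSr hexp h1' h2'
  refine ⟨f, hfW, hfeven, ?_⟩
  rw [hdotp, hAeq, hTeq, lt_div_iff₀ h1Sr]
  exact hkey
end
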